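/- arXiv:2603.17080 — 3 statements merged into one kernel-verified Lean document; each statement's English description precedes it below -/
import Mathlib

section
/- Let P⋆ ∈ Gr(m,ℝ^M) be a local minimizer of J on Gr(m,ℝ^M). Then [G(P⋆),P⋆] = 0, and for every real symmetric M×M matrix X satisfying XP⋆ + P⋆X = X (i.e. X in the tangent space to Gr(m,ℝ^M) at P⋆) one has ⟨X, [[G(P⋆),X],P⋆] − [[AXA,P⋆],P⋆]⟩ ≥ 0. -/
open Matrix Filter Topology

noncomputable section

/-- Commutator of matrices. -/
def commut {M : ℕ} (X Y : Matrix (Fin M) (Fin M) ℝ) : Matrix (Fin M) (Fin M) ℝ :=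
  X * Y - Y * X

/-- The Grassmann manifold `Gr(m, ℝ^M)`. -/
def Gr (M m : ℕ) (P : Matrix (Fin M) (Fin M) ℝ) : Prop :=
  P.IsSymm ∧ P * P = P ∧ P.trace = (m : ℝ)

/-- The cost function `J(P) = Tr(BP) - (1/2) Tr(APAP)`. -/
def Jfun {M : ℕ} (A B P : Matrix (Fin M) (Fin M) ℝ) : ℝ :=
  (B * P).trace - (1 / 2) * (A * P * A * P).trace

/-- The gradient `G(P) = B - APA`. -/
def Gmap {M : ℕ} (A B P : Matrix (Fin M) (Fin M) ℝ) : Matrix (Fin M) (Fin M) ℝ :=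
  B - A * P * A

/-- Frobenius inner product `⟨X,Y⟩ = Tr(Xᵀ Y)`. -/
def frobInner {M : ℕ} (X Y : Matrix (Fin M) (Fin M) ℝ) : ℝ := (Xᵀ * Y).trace


/-!
Every skew-symmetric `Ω` gives a curve `t ↦ exp(tΩ) P⋆ exp(-tΩ)` in `Gr(m, ℝ^M)` through `P⋆`
with velocity `[Ω, P⋆]`, so `J` restricted to it has a local minimum at `t = 0`: its first
derivative `Tr(G [Ω, P⋆])` vanishes and its second derivative
`Tr(G [Ω, [Ω, P⋆]]) - Tr(A [Ω, P⋆] A [Ω, P⋆])` is nonnegative.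
For `Ω = [G, P⋆]`, which is skew because `G` and `P⋆` are symmetric, the first condition says
`‖[G, P⋆]‖² = 0`. For a tangent vector `X`, `Ω = [X, P⋆]` satisfies `[Ω, P⋆] = X`, and the
invariance `Tr(A [B, C]) = Tr([A, B] C)` of the trace form turns the second condition into the
stated inequality.
-/

open NormedSpace

attribute [local instance] LieRing.ofAssociativeRing

theorem IsLocalMin.deriv_deriv_nonneg {f : ℝ → ℝ} {a : ℝ} (hf : IsLocalMin f a)
    (hc : ContinuousAt f a) : 0 ≤ deriv (deriv f) a := by
  by_contra! h
  -- a strictly negative second derivative would also make `a` a local maximum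
  have hmax := isLocalMax_of_deriv_deriv_neg h hf.deriv_eq_zero hc
  have hconst : f =ᶠ[𝓝 a] fun _ => f a := (hf.and hmax).mono fun _ hx => le_antisymm hx.2 hx.1
  have hderiv : deriv f =ᶠ[𝓝 a] fun _ => 0 :=
    hconst.eventuallyEq_nhds.mono fun _ hx => by rw [hx.deriv_eq, deriv_const]
  rw [hderiv.deriv_eq, deriv_const] at h
  exact lt_irrefl _ h

section Ring

variable {R : Type*} [Ring R] {P X : R}

theorem mul_mul_eq_zero_of_mul_add_mul_eq (hP : P * P = P) (hX : X * P + P * X = X) :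
    P * X * P = 0 := by
  have h : P * X * P + P * X * P = P * X * P := by
    calc P * X * P + P * X * P = P * X * (P * P) + P * P * X * P := by rw [hP]
      _ = P * (X * P + P * X) * P := by noncomm_ring
      _ = P * X * P := by rw [hX]
  simpa using h

theorem lie_lie_eq_self_of_mul_add_mul_eq (hP : P * P = P) (hX : X * P + P * X = X) :
    ⁅⁅X, P⁆, P⁆ = X := by
  calc ⁅⁅X, P⁆, P⁆ = X * (P * P) + P * P * X - 2 * (P * X * P) := by
        simp only [Ring.lie_def]
        noncomm_ring
    _ = X := by rw [hP, hX, mul_mul_eq_zero_of_mul_add_mul_eq hP hX, mul_zero, sub_zero]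

end Ring

namespace Matrix

variable {n R : Type*} [Fintype n] [CommRing R]

theorem trace_mul_lie (A B C : Matrix n n R) : (A * ⁅B, C⁆).trace = (⁅A, B⁆ * C).trace := by
  simp only [Ring.lie_def, Matrix.mul_sub, Matrix.sub_mul, trace_sub, ← Matrix.mul_assoc,
    trace_mul_cycle A C B]

variable [DecidableEq n]

theorem lie_transpose_of_isSymm {X Y : Matrix n n R} (hX : X.IsSymm) (hY : Y.IsSymm) :
    ⁅X, Y⁆ᵀ = -⁅X, Y⁆ := by
  rw [lie_transpose, hX.eq, hY.eq, ← lie_skew]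

theorem trace_mul_lie_lie_of_mul_add_mul_eq {P X : Matrix n n R} (hP : P * P = P)
    (hX : X * P + P * X = X) (Y : Matrix n n R) : (X * ⁅⁅Y, P⁆, P⁆).trace = (X * Y).trace := by
  calc (X * ⁅⁅Y, P⁆, P⁆).trace = -(⁅X, P⁆ * ⁅Y, P⁆).trace := by
        rw [← lie_skew ⁅Y, P⁆ P, Matrix.mul_neg, trace_neg, trace_mul_lie]
    _ = (⁅⁅X, P⁆, P⁆ * Y).trace := by
        rw [← lie_skew Y P, Matrix.mul_neg, trace_neg, neg_neg, trace_mul_lie]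
    _ = (X * Y).trace := by rw [lie_lie_eq_self_of_mul_add_mul_eq hP hX]

theorem trace_mul_lie_lie_self (G P : Matrix n n R) :
    (G * ⁅⁅G, P⁆, P⁆).trace = -(⁅G, P⁆ * ⁅G, P⁆).trace := by
  rw [trace_mul_lie, ← lie_skew G, Matrix.neg_mul, trace_neg, ← trace_mul_lie]

theorem trace_mul_lie_lie_comm (G X P : Matrix n n R) :
    (X * ⁅⁅G, X⁆, P⁆).trace = (G * ⁅⁅X, P⁆, X⁆).trace := by
  calc (X * ⁅⁅G, X⁆, P⁆).trace = -(⁅X, P⁆ * ⁅G, X⁆).trace := by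
        rw [← lie_skew ⁅G, X⁆ P, Matrix.mul_neg, trace_neg, trace_mul_lie]
    _ = (⁅⁅X, P⁆, X⁆ * G).trace := by
        rw [← lie_skew G X, Matrix.mul_neg, trace_neg, neg_neg, trace_mul_lie]
    _ = (G * ⁅⁅X, P⁆, X⁆).trace := trace_mul_comm _ _

end Matrix

open scoped Norms.Operator in
theorem HasDerivAt.matrix_trace {n : Type*} [Fintype n] {f : ℝ → Matrix n n ℝ}
    {f' : Matrix n n ℝ} {t : ℝ} (h : HasDerivAt f f' t) :
    HasDerivAt (fun s => (f s).trace) f'.trace t :=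
  (traceLinearMap n ℝ ℝ).toContinuousLinearMap.hasFDerivAt.comp_hasDerivAt t h

section ConjCurve

variable {n : Type*} [Fintype n] [DecidableEq n]

def conjCurve (Ω P : Matrix n n ℝ) (t : ℝ) : Matrix n n ℝ := exp (t • Ω) * P * exp (t • -Ω)

variable (Ω : Matrix n n ℝ)

theorem exp_smul_neg_mul_exp_smul (t : ℝ) : exp (t • -Ω) * exp (t • Ω) = 1 := by
  rw [← Matrix.exp_add_of_commute _ _ (((Commute.refl Ω).neg_left.smul_left t).smul_right t),
    smul_neg, neg_add_cancel, exp_zero]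

theorem conjCurve_zero (P : Matrix n n ℝ) : conjCurve Ω P 0 = P := by
  simp [conjCurve]

theorem conjCurve_mul (P Q : Matrix n n ℝ) (t : ℝ) :
    conjCurve Ω (P * Q) t = conjCurve Ω P t * conjCurve Ω Q t := by
  simp only [conjCurve, Matrix.mul_assoc]
  rw [← Matrix.mul_assoc (exp (t • -Ω)), exp_smul_neg_mul_exp_smul, Matrix.one_mul]

theorem trace_conjCurve (P : Matrix n n ℝ) (t : ℝ) : (conjCurve Ω P t).trace = P.trace := by
  rw [conjCurve, trace_mul_comm, ← Matrix.mul_assoc, exp_smul_neg_mul_exp_smul, Matrix.one_mul]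

variable {Ω} in
theorem conjCurve_isSymm (hΩ : Ωᵀ = -Ω) {P : Matrix n n ℝ} (hP : P.IsSymm) (t : ℝ) :
    (conjCurve Ω P t).IsSymm := by
  have hexp : (exp (t • Ω))ᵀ = exp (t • -Ω) := by
    rw [← Matrix.exp_transpose, transpose_smul, hΩ]
  have hexp_neg : (exp (t • -Ω))ᵀ = exp (t • Ω) := by
    rw [← Matrix.exp_transpose, transpose_smul, transpose_neg, hΩ, neg_neg]
  simp only [IsSymm, conjCurve, transpose_mul, hexp, hexp_neg, hP.eq, Matrix.mul_assoc]

open scoped Norms.Operator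

theorem hasDerivAt_conjCurve (P : Matrix n n ℝ) (t : ℝ) :
    HasDerivAt (conjCurve Ω P) ⁅Ω, conjCurve Ω P t⁆ t := by
  have h := ((hasDerivAt_exp_smul_const' Ω t).mul_const P).mul
    (hasDerivAt_exp_smul_const (-Ω) t)
  refine h.congr_deriv ?_
  simp only [conjCurve, Ring.lie_def, Matrix.mul_assoc, Matrix.mul_neg]
  abel

theorem continuous_conjCurve (P : Matrix n n ℝ) : Continuous (conjCurve Ω P) :=
  continuous_iff_continuousAt.mpr fun t => (hasDerivAt_conjCurve Ω P t).continuousAt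

end ConjCurve

theorem conjCurve_mem_Gr {M m : ℕ} {Ω P : Matrix (Fin M) (Fin M) ℝ} (hΩ : Ωᵀ = -Ω)
    (hP : Gr M m P) (t : ℝ) : Gr M m (conjCurve Ω P t) :=
  ⟨conjCurve_isSymm hΩ hP.1 t, by rw [← conjCurve_mul, hP.2.1],
    by rw [trace_conjCurve, hP.2.2]⟩

theorem commut_eq_lie {M : ℕ} (X Y : Matrix (Fin M) (Fin M) ℝ) : commut X Y = ⁅X, Y⁆ := rfl

theorem Gmap_isSymm {M : ℕ} {A B P : Matrix (Fin M) (Fin M) ℝ} (hA : A.IsSymm) (hB : B.IsSymm)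
    (hP : P.IsSymm) : (Gmap A B P).IsSymm := by
  simp only [IsSymm, Gmap, transpose_sub, transpose_mul, hA.eq, hB.eq, hP.eq, Matrix.mul_assoc]

section Derivatives

open scoped Norms.Operator

variable {M : ℕ} (A B : Matrix (Fin M) (Fin M) ℝ) {P : ℝ → Matrix (Fin M) (Fin M) ℝ}
  {D : Matrix (Fin M) (Fin M) ℝ} {t : ℝ}

theorem hasDerivAt_Jfun_comp (hP : HasDerivAt P D t) :
    HasDerivAt (fun s => Jfun A B (P s)) (Gmap A B (P t) * D).trace t := by
  have hquad := (((hP.const_mul A).mul_const A).mul hP).matrix_trace.const_mul (1 / 2 : ℝ)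
  refine ((hP.const_mul B).matrix_trace.sub hquad).congr_deriv ?_
  have hcyc : (A * D * A * P t).trace = (A * P t * A * D).trace := by
    rw [Matrix.mul_assoc (A * D), trace_mul_comm]
    simp only [Matrix.mul_assoc]
  rw [trace_add, hcyc, Gmap, Matrix.sub_mul, trace_sub]
  ring

theorem hasDerivAt_trace_Gmap_comp_mul {Q : ℝ → Matrix (Fin M) (Fin M) ℝ}
    {E : Matrix (Fin M) (Fin M) ℝ} (hP : HasDerivAt P D t) (hQ : HasDerivAt Q E t) :
    HasDerivAt (fun s => (Gmap A B (P s) * Q s).trace)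
      ((Gmap A B (P t) * E).trace - (A * D * A * Q t).trace) t := by
  have hG : HasDerivAt (fun s => Gmap A B (P s)) (-(A * D * A)) t :=
    ((hP.const_mul A).mul_const A).const_sub B
  refine (hG.mul hQ).matrix_trace.congr_deriv ?_
  rw [trace_add, Matrix.neg_mul, trace_neg]
  ring

variable (Ω P₀ : Matrix (Fin M) (Fin M) ℝ)

theorem hasDerivAt_Jfun_conjCurve (t : ℝ) :
    HasDerivAt (fun s => Jfun A B (conjCurve Ω P₀ s))
      (Gmap A B (conjCurve Ω P₀ t) * ⁅Ω, conjCurve Ω P₀ t⁆).trace t :=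
  hasDerivAt_Jfun_comp A B (hasDerivAt_conjCurve Ω P₀ t)

theorem hasDerivAt_trace_Gmap_conjCurve_mul_lie :
    HasDerivAt (fun s => (Gmap A B (conjCurve Ω P₀ s) * ⁅Ω, conjCurve Ω P₀ s⁆).trace)
      ((Gmap A B P₀ * ⁅Ω, ⁅Ω, P₀⁆⁆).trace - (A * ⁅Ω, P₀⁆ * A * ⁅Ω, P₀⁆).trace) 0 := by
  have hP := hasDerivAt_conjCurve Ω P₀ 0
  have hlie : HasDerivAt (fun s => ⁅Ω, conjCurve Ω P₀ s⁆) ⁅Ω, ⁅Ω, P₀⁆⁆ 0 := by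
    rw [conjCurve_zero] at hP
    exact (hP.const_mul Ω).sub (hP.mul_const Ω)
  simpa only [conjCurve_zero] using hasDerivAt_trace_Gmap_comp_mul A B hP hlie

end Derivatives

section LocalMin

variable {M m : ℕ} {A B P Ω : Matrix (Fin M) (Fin M) ℝ}

theorem IsLocalMinOn.isLocalMin_Jfun_conjCurve
    (hmin : IsLocalMinOn (Jfun A B) {Q | Gr M m Q} P) (hP : Gr M m P) (hΩ : Ωᵀ = -Ω) :
    IsLocalMin (fun t => Jfun A B (conjCurve Ω P t)) 0 := by
  have hcurve : Tendsto (conjCurve Ω P) (𝓝 0) (𝓝[{Q | Gr M m Q}] P) := by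
    refine tendsto_nhdsWithin_iff.mpr ⟨?_, Eventually.of_forall (conjCurve_mem_Gr hΩ hP)⟩
    simpa only [conjCurve_zero] using (continuous_conjCurve Ω P).tendsto 0
  exact IsMinFilter.comp_tendsto (f := Jfun A B) (by rwa [conjCurve_zero]) hcurve

theorem IsLocalMinOn.trace_Gmap_mul_lie_eq_zero
    (hmin : IsLocalMinOn (Jfun A B) {Q | Gr M m Q} P) (hP : Gr M m P) (hΩ : Ωᵀ = -Ω) :
    (Gmap A B P * ⁅Ω, P⁆).trace = 0 := by
  simpa only [conjCurve_zero] using (hmin.isLocalMin_Jfun_conjCurve hP hΩ).hasDerivAt_eq_zero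
    (hasDerivAt_Jfun_conjCurve A B Ω P 0)

theorem IsLocalMinOn.trace_Gmap_mul_lie_lie_sub_nonneg
    (hmin : IsLocalMinOn (Jfun A B) {Q | Gr M m Q} P) (hP : Gr M m P) (hΩ : Ωᵀ = -Ω) :
    0 ≤ (Gmap A B P * ⁅Ω, ⁅Ω, P⁆⁆).trace - (A * ⁅Ω, P⁆ * A * ⁅Ω, P⁆).trace := by
  have hderiv : deriv (fun t => Jfun A B (conjCurve Ω P t)) =
      fun t => (Gmap A B (conjCurve Ω P t) * ⁅Ω, conjCurve Ω P t⁆).trace :=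
    funext fun t => (hasDerivAt_Jfun_conjCurve A B Ω P t).deriv
  have h := (hmin.isLocalMin_Jfun_conjCurve hP hΩ).deriv_deriv_nonneg
    (hasDerivAt_Jfun_conjCurve A B Ω P 0).continuousAt
  rwa [hderiv, (hasDerivAt_trace_Gmap_conjCurve_mul_lie A B Ω P).deriv] at h

end LocalMin

theorem stmt_1_general {M m : ℕ}
    (A B : Matrix (Fin M) (Fin M) ℝ) (hA : A.IsSymm)
    (hB : B.IsSymm) (Pstar : Matrix (Fin M) (Fin M) ℝ) (hP : Gr M m Pstar)
    (hmin : IsLocalMinOn (fun P => Jfun A B P) {P | Gr M m P} Pstar) :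
    commut (Gmap A B Pstar) Pstar = 0 ∧
      ∀ X : Matrix (Fin M) (Fin M) ℝ, X.IsSymm → X * Pstar + Pstar * X = X →
        0 ≤ frobInner X
          (commut (commut (Gmap A B Pstar) X) Pstar -
            commut (commut (A * X * A) Pstar) Pstar) := by
  obtain ⟨hPs, hP2, -⟩ := id hP
  refine ⟨?_, fun X hXs hXt => ?_⟩
  · have hS := lie_transpose_of_isSymm (Gmap_isSymm hA hB hPs) hPs
    rw [commut_eq_lie, ← trace_conjTranspose_mul_self_eq_zero_iff,
      conjTranspose_eq_transpose_of_trivial, hS, Matrix.neg_mul, trace_neg,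
      ← trace_mul_lie_lie_self, hmin.trace_Gmap_mul_lie_eq_zero hP hS]
  · have h := hmin.trace_Gmap_mul_lie_lie_sub_nonneg hP (lie_transpose_of_isSymm hXs hPs)
    rw [lie_lie_eq_self_of_mul_add_mul_eq hP2 hXt] at h
    simp only [frobInner, hXs.eq, commut_eq_lie]
    rw [Matrix.mul_sub, trace_sub, trace_mul_lie_lie_comm,
      trace_mul_lie_lie_of_mul_add_mul_eq hP2 hXt, trace_mul_comm X]
    exact h

/-- if `P⋆ ∈ Gr(m,ℝ^M)` is a local minimizer of `J` on `Gr(m,ℝ^M)`, then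
`[G(P⋆),P⋆] = 0` and for every symmetric `X` with `XP⋆ + P⋆X = X` (tangent vector),
`⟨X, [[G(P⋆),X],P⋆] − [[AXA,P⋆],P⋆]⟩ ≥ 0`. -/
theorem stmt_1 {M m : ℕ} (hM : 2 ≤ M) (hm1 : 1 ≤ m) (hm2 : m ≤ M - 1)
    (A B : Matrix (Fin M) (Fin M) ℝ) (hA : A.IsSymm) (hApsd : A.PosSemidef)
    (hB : B.IsSymm) (Pstar : Matrix (Fin M) (Fin M) ℝ) (hP : Gr M m Pstar)
    (hmin : IsLocalMinOn (fun P => Jfun A B P) {P | Gr M m P} Pstar) :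
    commut (Gmap A B Pstar) Pstar = 0 ∧
      ∀ X : Matrix (Fin M) (Fin M) ℝ, X.IsSymm → X * Pstar + Pstar * X = X →
        0 ≤ frobInner X
          (commut (commut (Gmap A B Pstar) X) Pstar -
            commut (commut (A * X * A) Pstar) Pstar) :=
  stmt_1_general A B hA hB Pstar hP hmin
end
end

section
/- Let A, B be real symmetric M×M matrices with A positive semidefinite and invertible (hence positive definite), and let P⋆ be a global minimizer of J over Gr(m,ℝ^M). Let λ₁ ≤ ⋯ ≤ λ_M be the eigenvalues of G(P⋆) counted with multiplicity. Then λ_m < λ_{m+1}, and P⋆ = 1_{(−∞,λ_m]}(G(P⋆)), i.e. P⋆ is the orthogonal projector onto the sum of eigenspaces of G(P⋆) associated with eigenvalues ≤ λ_m. -/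
open Matrix Filter Topology

noncomputable section

/-- `μ` is the non-decreasing enumeration of the eigenvalues of `S`, with multiplicity. -/
def sortedEigs {M : ℕ} (S : Matrix (Fin M) (Fin M) ℝ) (μ : Fin M → ℝ) : Prop :=
  Monotone μ ∧ ∃ U : Matrix (Fin M) (Fin M) ℝ, U * Uᵀ = 1 ∧ S = U * Matrix.diagonal μ * Uᵀ

/-- `P = 1_{(-∞,t]}(S)`: the orthogonal projector onto the sum of the eigenspaces of the
symmetric matrix `S` associated with eigenvalues `≤ t`. -/
def IsSpectralProjLE {M : ℕ} (S : Matrix (Fin M) (Fin M) ℝ) (t : ℝ)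
    (P : Matrix (Fin M) (Fin M) ℝ) : Prop :=
  P.IsSymm ∧ P * P = P ∧ S * P = P * S ∧
  (∀ v : Fin M → ℝ, P.mulVec v = v → S.mulVec v ⬝ᵥ v ≤ t * (v ⬝ᵥ v)) ∧
  (∀ v : Fin M → ℝ, v ≠ 0 → P.mulVec v = 0 → t * (v ⬝ᵥ v) < S.mulVec v ⬝ᵥ v)

/-!
Expanding `J` around `P⋆` gives
`J Q - J P⋆ = Tr (G(P⋆) (Q - P⋆)) - ½ ‖A^{1/2} (Q - P⋆) A^{1/2}‖²`, and since `A` is positive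
definite the quadratic term vanishes only at `Q = P⋆`; so `P⋆` is the unique minimizer of the
linear functional `Q ↦ Tr (G(P⋆) Q)` on the Grassmannian. Write `G(P⋆) = U diag(λ) Uᵀ`. For any
`P` in the Grassmannian the diagonal of `Uᵀ P U` lies in `[0, 1]` and sums to `m`, so
`Tr (G(P⋆) P) ≥ λ₁ + ⋯ + λ_m` (Ky Fan), with equality for the projector onto the first `m`
columns of `U`. Uniqueness forces `P⋆` to be this projector, and if `λ_m = λ_{m+1}`, exchanging
the columns `m` and `m + 1` would give a second minimizer.
-/

namespace Matrix

variable {n : Type*} [Fintype n]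

theorem IsSymm.conj {X : Matrix n n ℝ} (hX : X.IsSymm) (U : Matrix n n ℝ) :
    (U * X * Uᵀ).IsSymm := by
  simp [IsSymm, transpose_mul, hX.eq, Matrix.mul_assoc]

theorem IsSymm.diag_mem_Icc_of_mul_self {R : Matrix n n ℝ} (hR : R.IsSymm) (hRR : R * R = R)
    (i : n) : R i i ∈ Set.Icc 0 1 := by
  have hdiag : R i i = ∑ j, R i j * R i j := by
    conv_lhs => rw [← hRR, mul_apply]
    exact Finset.sum_congr rfl fun j _ => by rw [← hR.apply i j]
  have hsq : R i i * R i i ≤ R i i := hdiag ▸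
    Finset.single_le_sum (f := fun j => R i j * R i j) (fun j _ => mul_self_nonneg _)
      (Finset.mem_univ i)
  have hnn : 0 ≤ R i i := hdiag ▸ Finset.sum_nonneg fun j _ => mul_self_nonneg _
  exact ⟨hnn, by nlinarith⟩

variable [DecidableEq n]

theorem conj_mul_conj {U : Matrix n n ℝ} (hU : Uᵀ * U = 1) (X Y : Matrix n n ℝ) :
    U * X * Uᵀ * (U * Y * Uᵀ) = U * (X * Y) * Uᵀ := by
  simp only [Matrix.mul_assoc]
  rw [← Matrix.mul_assoc Uᵀ U, hU, Matrix.one_mul]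

theorem transpose_mul_conj_mul {U : Matrix n n ℝ} (hU : Uᵀ * U = 1) (X : Matrix n n ℝ) :
    Uᵀ * (U * X * Uᵀ) * U = X := by
  simp only [Matrix.mul_assoc, hU, Matrix.mul_one]
  rw [← Matrix.mul_assoc, hU, Matrix.one_mul]

theorem trace_mul_mul_transpose {U : Matrix n n ℝ} (hU : Uᵀ * U = 1) (X : Matrix n n ℝ) :
    (U * X * Uᵀ).trace = X.trace := by
  rw [trace_mul_comm, ← Matrix.mul_assoc, hU, Matrix.one_mul]

theorem mulVec_conj_mulVec {U : Matrix n n ℝ} (hU : Uᵀ * U = 1) (X : Matrix n n ℝ)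
    (w : n → ℝ) : (U * X * Uᵀ) *ᵥ (U *ᵥ w) = U *ᵥ (X *ᵥ w) := by
  simp only [mulVec_mulVec, Matrix.mul_assoc, hU, Matrix.mul_one]

theorem mulVec_dotProduct_mulVec {U : Matrix n n ℝ} (hU : Uᵀ * U = 1) (x y : n → ℝ) :
    (U *ᵥ x) ⬝ᵥ (U *ᵥ y) = x ⬝ᵥ y := by
  rw [dotProduct_mulVec, ← mulVec_transpose, mulVec_mulVec, hU, one_mulVec]

theorem mulVec_injective_of_transpose_mul {U : Matrix n n ℝ} (hU : Uᵀ * U = 1) :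
    Function.Injective (U *ᵥ ·) := fun x y h => by
  simpa [mulVec_mulVec, hU] using congrArg (Uᵀ *ᵥ ·) h

open scoped MatrixOrder in
theorem trace_mul_mul_mul_self_pos {A H : Matrix n n ℝ} (hA : A.PosSemidef) (hAu : IsUnit A)
    (hH : H.IsSymm) (hH0 : H ≠ 0) : 0 < (A * H * A * H).trace := by
  set C := CFC.sqrt A
  have hCC : C * C = A := CFC.sqrt_mul_sqrt_self A hA.nonneg
  have hC : Cᵀ = C := by
    simpa [IsHermitian, conjTranspose_eq_transpose_of_trivial] using
      (CFC.sqrt_nonneg A).posSemidef.1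
  have hCu : IsUnit C := (CFC.isUnit_sqrt_iff A hA.nonneg).2 hAu
  set S := C * H * C
  have hS0 : S ≠ 0 := fun h => hH0 <| hCu.mul_right_cancel <| hCu.mul_left_cancel <| by
    rw [zero_mul, Matrix.mul_zero, ← Matrix.mul_assoc]; exact h
  have hS : Sᴴ = S := by
    simp [S, conjTranspose_eq_transpose_of_trivial, transpose_mul, hC, hH.eq,
      Matrix.mul_assoc]
  have htr : (A * H * A * H).trace = (Sᴴ * S).trace := by
    rw [hS, ← hCC]
    simp only [Matrix.mul_assoc]
    rw [trace_mul_comm C]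
    simp only [S, Matrix.mul_assoc]
  rw [htr]
  exact (posSemidef_conjTranspose_mul_self S).trace_nonneg.lt_of_ne
    fun h => hS0 (trace_conjTranspose_mul_self_eq_zero_iff.1 h.symm)

end Matrix

theorem Finset.sum_le_sum_mul_of_threshold {ι : Type*} [Fintype ι] [DecidableEq ι] (s : Finset ι)
    (μ d : ι → ℝ) (t : ℝ) (hs : ∀ i ∈ s, μ i ≤ t) (hsc : ∀ i ∉ s, t ≤ μ i)
    (hd : ∀ i, d i ∈ Set.Icc 0 1) (hsum : ∑ i, d i = s.card) :
    ∑ i ∈ s, μ i ≤ ∑ i, μ i * d i := by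
  set e : ι → ℝ := fun i => d i - if i ∈ s then 1 else 0
  have he : ∑ i, e i = 0 := by simp [e, Finset.sum_sub_distrib, hsum]
  have hterm : ∀ i ∈ Finset.univ, t * e i ≤ μ i * e i := fun i _ => by
    by_cases hi : i ∈ s
    · have : d i - 1 ≤ 0 := by linarith [(hd i).2]
      simp only [e, if_pos hi]; nlinarith [hs i hi]
    · simp only [e, if_neg hi, sub_zero]; nlinarith [hsc i hi, (hd i).1]
  have hle := Finset.sum_le_sum hterm
  rw [← Finset.mul_sum, he, mul_zero] at hle
  simpa [e, mul_sub, Finset.sum_sub_distrib] using hle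

section Grassmannian

variable {M m : ℕ}

theorem Gr.conj {P U : Matrix (Fin M) (Fin M) ℝ} (hP : Gr M m P) (hU : U * Uᵀ = 1) :
    Gr M m (U * P * Uᵀ) := by
  have hU' : Uᵀ * U = 1 := mul_eq_one_comm.mp hU
  exact ⟨hP.1.conj U, by rw [conj_mul_conj hU', hP.2.1], by
    rw [trace_mul_mul_transpose hU', hP.2.2]⟩

theorem gr_diagonal_indicator (s : Finset (Fin M)) :
    Gr M s.card (diagonal fun i => if i ∈ s then 1 else 0) := by
  refine ⟨isSymm_diagonal _, ?_, by simp [trace_diagonal]⟩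
  rw [diagonal_mul_diagonal]
  congr 1; ext i; split_ifs <;> simp

end Grassmannian

namespace Matrix

variable {n : Type*} [Fintype n] [DecidableEq n]

def colSpanProj (U : Matrix n n ℝ) (s : Finset n) : Matrix n n ℝ :=
  U * diagonal (fun i => if i ∈ s then 1 else 0) * Uᵀ

theorem transpose_mul_colSpanProj_mul {U : Matrix n n ℝ} (hU : Uᵀ * U = 1) (s : Finset n) :
    Uᵀ * colSpanProj U s * U = diagonal fun i => if i ∈ s then 1 else 0 :=
  transpose_mul_conj_mul hU _

theorem colSpanProj_injective {U : Matrix n n ℝ} (hU : Uᵀ * U = 1) :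
    Function.Injective (colSpanProj U) := by
  intro s s' h
  have h' := congrArg (fun X => Uᵀ * X * U) h
  simp only [transpose_mul_colSpanProj_mul hU] at h'
  ext i
  have hi := congrFun (diagonal_injective h') i
  split_ifs at hi <;> simp_all

theorem trace_conj_diagonal_mul (U : Matrix n n ℝ) (d : n → ℝ) (P : Matrix n n ℝ) :
    (U * diagonal d * Uᵀ * P).trace = ∑ i, d i * (Uᵀ * P * U) i i := by
  rw [Matrix.mul_assoc, Matrix.mul_assoc, trace_mul_comm]
  simp [trace, Matrix.mul_assoc, diagonal_mul]

theorem trace_conj_diagonal_mul_colSpanProj {U : Matrix n n ℝ} (hU : Uᵀ * U = 1) (d : n → ℝ)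
    (s : Finset n) : (U * diagonal d * Uᵀ * colSpanProj U s).trace = ∑ i ∈ s, d i := by
  rw [trace_conj_diagonal_mul, transpose_mul_colSpanProj_mul hU]
  simp [mul_ite, Finset.sum_ite_mem]

end Matrix

section Grassmannian

variable {M m : ℕ}

theorem gr_colSpanProj {U : Matrix (Fin M) (Fin M) ℝ} (hU : U * Uᵀ = 1) {s : Finset (Fin M)}
    (hs : s.card = m) : Gr M m (colSpanProj U s) :=
  hs ▸ (gr_diagonal_indicator s).conj hU

theorem sum_le_trace_conj_diagonal_mul_of_gr {P U : Matrix (Fin M) (Fin M) ℝ} {d : Fin M → ℝ}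
    {s : Finset (Fin M)} {t : ℝ} (hU : U * Uᵀ = 1) (hP : Gr M m P) (hs : s.card = m)
    (hlo : ∀ i ∈ s, d i ≤ t) (hhi : ∀ i ∉ s, t ≤ d i) :
    ∑ i ∈ s, d i ≤ (U * diagonal d * Uᵀ * P).trace := by
  have hR : Gr M m (Uᵀ * P * U) := by
    simpa using hP.conj (U := Uᵀ) (by simpa using mul_eq_one_comm.mp hU)
  rw [trace_conj_diagonal_mul]
  refine Finset.sum_le_sum_mul_of_threshold s d _ t hlo hhi
    (hR.1.diag_mem_Icc_of_mul_self hR.2.1) ?_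
  rw [hs, ← hR.2.2]
  rfl

end Grassmannian

section SpectralProjector

variable {M : ℕ} {t : ℝ}

theorem isSpectralProjLE_diagonal {d : Fin M → ℝ} {s : Finset (Fin M)}
    (hlo : ∀ i ∈ s, d i ≤ t) (hhi : ∀ i ∉ s, t < d i) :
    IsSpectralProjLE (diagonal d) t (diagonal fun i => if i ∈ s then 1 else 0) := by
  refine ⟨isSymm_diagonal _, (gr_diagonal_indicator s).2.1,
    by simp [diagonal_mul_diagonal, mul_comm], fun v hv => ?_, fun v hv hv0 => ?_⟩
  · have hvs : ∀ i ∉ s, v i = 0 := fun i hi => by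
      simpa [mulVec_diagonal, hi, eq_comm] using congrFun hv i
    simp only [mulVec_diagonal, dotProduct, Finset.mul_sum]
    refine Finset.sum_le_sum fun i _ => ?_
    by_cases hi : i ∈ s
    · nlinarith [hlo i hi, mul_self_nonneg (v i)]
    · simp [hvs i hi]
  · have hvs : ∀ i ∈ s, v i = 0 := fun i hi => by
      simpa [mulVec_diagonal, hi] using congrFun hv0 i
    obtain ⟨j, hj⟩ := Function.ne_iff.1 hv
    have hjs : j ∉ s := fun h => hj (hvs j h)
    simp only [mulVec_diagonal, dotProduct, Finset.mul_sum]
    refine Finset.sum_lt_sum (fun i _ => ?_) ⟨j, Finset.mem_univ j, ?_⟩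
    · by_cases hi : i ∈ s
      · simp [hvs i hi]
      · nlinarith [hhi i hi, mul_self_nonneg (v i)]
    · nlinarith [hhi j hjs, mul_self_pos.2 hj]

theorem IsSpectralProjLE.conj {S P U : Matrix (Fin M) (Fin M) ℝ} (h : IsSpectralProjLE S t P)
    (hU : U * Uᵀ = 1) : IsSpectralProjLE (U * S * Uᵀ) t (U * P * Uᵀ) := by
  obtain ⟨hsymm, hidem, hcomm, hle, hlt⟩ := h
  have hU' : Uᵀ * U = 1 := mul_eq_one_comm.mp hU
  have hsurj : ∀ v, ∃ w, v = U *ᵥ w := fun v => ⟨Uᵀ *ᵥ v, by simp [mulVec_mulVec, hU]⟩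
  refine ⟨hsymm.conj U, by rw [conj_mul_conj hU', hidem],
    by rw [conj_mul_conj hU', conj_mul_conj hU', hcomm], fun v hv => ?_, fun v hv0 hv => ?_⟩
  · obtain ⟨w, rfl⟩ := hsurj v
    rw [mulVec_conj_mulVec hU'] at hv ⊢
    rw [mulVec_dotProduct_mulVec hU', mulVec_dotProduct_mulVec hU']
    exact hle w (mulVec_injective_of_transpose_mul hU' hv)
  · obtain ⟨w, rfl⟩ := hsurj v
    rw [mulVec_conj_mulVec hU'] at hv ⊢
    rw [mulVec_dotProduct_mulVec hU', mulVec_dotProduct_mulVec hU']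
    exact hlt w (by rintro rfl; simp at hv0)
      (mulVec_injective_of_transpose_mul hU' (by simpa using hv))

theorem isSpectralProjLE_colSpanProj {U : Matrix (Fin M) (Fin M) ℝ} {d : Fin M → ℝ}
    {s : Finset (Fin M)} (hU : U * Uᵀ = 1) (hlo : ∀ i ∈ s, d i ≤ t) (hhi : ∀ i ∉ s, t < d i) :
    IsSpectralProjLE (U * diagonal d * Uᵀ) t (colSpanProj U s) :=
  (isSpectralProjLE_diagonal hlo hhi).conj hU

end SpectralProjector

section Minimizer

variable {M : ℕ}

theorem Jfun_sub (A B P Q : Matrix (Fin M) (Fin M) ℝ) :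
    Jfun A B Q - Jfun A B P =
      (Gmap A B P * (Q - P)).trace - 1 / 2 * (A * (Q - P) * A * (Q - P)).trace := by
  have h := trace_mul_comm (A * Q) (A * P)
  simp only [Jfun, Gmap, Matrix.sub_mul, Matrix.mul_sub, trace_sub, Matrix.mul_assoc] at h ⊢
  linarith

theorem trace_gmap_mul_lt_of_Jfun_le {A B P Q : Matrix (Fin M) (Fin M) ℝ} (hA : A.PosSemidef)
    (hAu : IsUnit A) (hP : P.IsSymm) (hQ : Q.IsSymm) (hPQ : Jfun A B P ≤ Jfun A B Q)
    (hne : Q ≠ P) : (Gmap A B P * P).trace < (Gmap A B P * Q).trace := by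
  have hpos := trace_mul_mul_mul_self_pos hA hAu (hQ.sub hP) (sub_ne_zero.2 hne)
  have hdiff := Jfun_sub A B P Q
  rw [Matrix.mul_sub, trace_sub] at hdiff
  linarith

end Minimizer

section StrictMinimizer

variable {M m : ℕ} {U : Matrix (Fin M) (Fin M) ℝ} {d : Fin M → ℝ} {s : Finset (Fin M)}

theorem eq_colSpanProj_of_trace_lt {P : Matrix (Fin M) (Fin M) ℝ} {t : ℝ} (hU : U * Uᵀ = 1)
    (hP : Gr M m P) (hs : s.card = m) (hlo : ∀ i ∈ s, d i ≤ t) (hhi : ∀ i ∉ s, t ≤ d i)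
    (hmin : ∀ Q, Gr M m Q → Q ≠ P →
      (U * diagonal d * Uᵀ * P).trace < (U * diagonal d * Uᵀ * Q).trace) :
    P = colSpanProj U s := by
  by_contra h
  have hlt := hmin _ (gr_colSpanProj hU hs) (Ne.symm h)
  have hle := sum_le_trace_conj_diagonal_mul_of_gr hU hP hs hlo hhi
  rw [trace_conj_diagonal_mul_colSpanProj (mul_eq_one_comm.mp hU)] at hlt
  linarith

theorem lt_of_trace_colSpanProj_lt {a b : Fin M} (hU : U * Uᵀ = 1) (hs : s.card = m)
    (ha : a ∈ s) (hb : b ∉ s)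
    (hmin : ∀ Q, Gr M m Q → Q ≠ colSpanProj U s →
      (U * diagonal d * Uᵀ * colSpanProj U s).trace < (U * diagonal d * Uᵀ * Q).trace) :
    d a < d b := by
  have hU' : Uᵀ * U = 1 := mul_eq_one_comm.mp hU
  set s' := insert b (s.erase a)
  have hb' : b ∉ s.erase a := fun h => hb (Finset.mem_of_mem_erase h)
  have hs' : s'.card = m := by
    rw [Finset.card_insert_of_notMem hb', Finset.card_erase_of_mem ha,
      Nat.sub_add_cancel (Finset.card_pos.2 ⟨a, ha⟩), hs]
  have hss' : s' ≠ s :=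
    (ne_of_mem_of_not_mem' ha (by simp [s', ne_of_mem_of_not_mem ha hb])).symm
  have hlt := hmin _ (gr_colSpanProj hU hs') ((colSpanProj_injective hU').ne hss')
  rw [trace_conj_diagonal_mul_colSpanProj hU', trace_conj_diagonal_mul_colSpanProj hU',
    Finset.sum_insert hb', Finset.sum_erase_eq_sub ha] at hlt
  linarith

end StrictMinimizer

/-- if `A` is moreover invertible and `P⋆` is a global minimizer of `J` on
`Gr(m,ℝ^M)`, and `λ₁ ≤ ⋯ ≤ λ_M` are the eigenvalues of `G(P⋆)`, then `λ_m < λ_{m+1}` and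
`P⋆ = 1_{(−∞,λ_m]}(G(P⋆))`. -/
theorem stmt_3 {M m : ℕ} (hm1 : 1 ≤ m) (hm2 : m ≤ M - 1)
    (A B : Matrix (Fin M) (Fin M) ℝ) (hApsd : A.PosSemidef)
    (hAinv : IsUnit A)
    (Pstar : Matrix (Fin M) (Fin M) ℝ) (hP : Gr M m Pstar)
    (hmin : ∀ P : Matrix (Fin M) (Fin M) ℝ, Gr M m P → Jfun A B Pstar ≤ Jfun A B P)
    (lam : Fin M → ℝ) (hlam : sortedEigs (Gmap A B Pstar) lam) :
    lam ⟨m - 1, by omega⟩ < lam ⟨m, by omega⟩ ∧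
      IsSpectralProjLE (Gmap A B Pstar) (lam ⟨m - 1, by omega⟩) Pstar := by
  obtain ⟨hmono, U, hU, hGU⟩ := hlam
  set a : Fin M := ⟨m - 1, by omega⟩
  set b : Fin M := ⟨m, by omega⟩
  set s : Finset (Fin M) := {i | (i : ℕ) < m}
  have hs : s.card = m := by simp [s, Fin.card_filter_val_lt]; omega
  have has : a ∈ s := by simp [s, a]; omega
  have hbs : b ∉ s := by simp [s, b]
  have hlo : ∀ i ∈ s, lam i ≤ lam a := fun i hi =>
    hmono (by simp [s] at hi; simp [a, Fin.le_def]; omega)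
  have hhi : ∀ i ∉ s, lam b ≤ lam i := fun i hi =>
    hmono (by simp [s] at hi; simp [b, Fin.le_def]; omega)
  have hab : lam a ≤ lam b := hmono (by simp [a, b, Fin.le_def])
  have hbetter : ∀ Q, Gr M m Q → Q ≠ Pstar →
      (U * diagonal lam * Uᵀ * Pstar).trace < (U * diagonal lam * Uᵀ * Q).trace :=
    fun Q hQ hne => hGU ▸ trace_gmap_mul_lt_of_Jfun_le hApsd hAinv hP.1 hQ.1 (hmin Q hQ) hne
  obtain rfl : Pstar = colSpanProj U s :=
    eq_colSpanProj_of_trace_lt hU hP hs hlo (fun i hi => hab.trans (hhi i hi)) hbetter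
  have hgap : lam a < lam b := lt_of_trace_colSpanProj_lt hU hs has hbs hbetter
  refine ⟨hgap, ?_⟩
  rw [hGU]
  exact isSpectralProjLE_colSpanProj hU hlo fun i hi => hgap.trans_le (hhi i hi)
end
end

section
/- Suppose A and B are real symmetric M×M matrices with A positive semidefinite and [A,B] = 0. Let C = B − (1/2)A² with eigenvalues c₁ ≤ ⋯ ≤ c_M counted with multiplicity. Then P ∈ Gr(m,ℝ^M) is a global minimizer of J over Gr(m,ℝ^M) if and only if P = 1_{(−∞,c_m)}(C) + Δ, where Δ is a real symmetric matrix with Δ² = Δ, Ran(Δ) ⊆ Ker(C − c_m I), [A,Δ] = 0, and Tr(P) = m. -/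
open Matrix Filter Topology

noncomputable section

/-- `P = 1_{(-∞,t)}(S)`: the orthogonal projector onto the sum of the eigenspaces of the
symmetric matrix `S` associated with eigenvalues `< t`. -/
def IsSpectralProjLT {M : ℕ} (S : Matrix (Fin M) (Fin M) ℝ) (t : ℝ)
    (P : Matrix (Fin M) (Fin M) ℝ) : Prop :=
  P.IsSymm ∧ P * P = P ∧ S * P = P * S ∧
  (∀ v : Fin M → ℝ, v ≠ 0 → P.mulVec v = v → S.mulVec v ⬝ᵥ v < t * (v ⬝ᵥ v)) ∧
  (∀ v : Fin M → ℝ, P.mulVec v = 0 → t * (v ⬝ᵥ v) ≤ S.mulVec v ⬝ᵥ v)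

namespace Stmt9
open Matrix Finset
variable {M : ℕ}

lemma trace_tmul_nonneg (X : Matrix (Fin M) (Fin M) ℝ) : 0 ≤ (Xᵀ * X).trace := by
  rw [Matrix.trace]
  refine Finset.sum_nonneg fun i _ => ?_
  simp only [Matrix.diag_apply, Matrix.mul_apply, Matrix.transpose_apply]
  exact Finset.sum_nonneg fun j _ => mul_self_nonneg _

lemma eq_zero_of_trace_tmul (X : Matrix (Fin M) (Fin M) ℝ)
    (h : (Xᵀ * X).trace = 0) : X = 0 := by
  have h1 : ∀ i ∈ Finset.univ (α := Fin M), (Xᵀ * X).diag i = 0 := by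
    refine (Finset.sum_eq_zero_iff_of_nonneg fun i _ => ?_).mp h
    simp only [Matrix.diag_apply, Matrix.mul_apply, Matrix.transpose_apply]
    exact Finset.sum_nonneg fun j _ => mul_self_nonneg _
  ext j i
  have h2 := h1 i (Finset.mem_univ i)
  simp only [Matrix.diag_apply, Matrix.mul_apply, Matrix.transpose_apply] at h2
  have h3 := (Finset.sum_eq_zero_iff_of_nonneg fun j _ => mul_self_nonneg (X j i)).mp h2
    j (Finset.mem_univ j)
  have := mul_self_eq_zero.mp h3
  simpa using this

lemma proj_diag_eq (Q : Matrix (Fin M) (Fin M) ℝ) (hs : Qᵀ = Q) (hi : Q * Q = Q)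
    (i : Fin M) : Q i i = ∑ j, Q i j * Q i j := by
  conv_lhs => rw [← hi]
  rw [Matrix.mul_apply]
  refine Finset.sum_congr rfl fun j _ => ?_
  congr 1
  conv_lhs => rw [← hs]
  rfl

lemma proj_diag_nonneg (Q : Matrix (Fin M) (Fin M) ℝ) (hs : Qᵀ = Q) (hi : Q * Q = Q)
    (i : Fin M) : 0 ≤ Q i i := by
  rw [proj_diag_eq Q hs hi i]
  exact Finset.sum_nonneg fun j _ => mul_self_nonneg _

lemma proj_diag_le_one (Q : Matrix (Fin M) (Fin M) ℝ) (hs : Qᵀ = Q) (hi : Q * Q = Q)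
    (i : Fin M) : Q i i ≤ 1 := by
  have h0 := proj_diag_eq Q hs hi i
  have h2 : Q i i * Q i i ≤ ∑ j, Q i j * Q i j :=
    Finset.single_le_sum (f := fun j => Q i j * Q i j) (fun j _ => mul_self_nonneg _)
      (Finset.mem_univ i)
  nlinarith [proj_diag_nonneg Q hs hi i]

lemma proj_row_zero (Q : Matrix (Fin M) (Fin M) ℝ) (hs : Qᵀ = Q) (hi : Q * Q = Q)
    (i : Fin M) (h : Q i i = 0) : ∀ j, Q i j = 0 := by
  intro j
  have h2 : ∑ l, Q i l * Q i l = 0 := by rw [← proj_diag_eq Q hs hi i, h]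
  have h3 := (Finset.sum_eq_zero_iff_of_nonneg fun l _ => mul_self_nonneg (Q i l)).mp h2
    j (Finset.mem_univ j)
  exact mul_self_eq_zero.mp h3

lemma proj_row_one (Q : Matrix (Fin M) (Fin M) ℝ) (hs : Qᵀ = Q) (hi : Q * Q = Q)
    (i : Fin M) (h : Q i i = 1) : ∀ j, Q i j = if i = j then 1 else 0 := by
  intro j
  have h2 : ∑ l ∈ Finset.univ.erase i, Q i l * Q i l = 0 := by
    have h0 := proj_diag_eq Q hs hi i
    rw [← Finset.add_sum_erase _ _ (Finset.mem_univ i), h] at h0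
    nlinarith
  by_cases hji : i = j
  · subst hji; simpa using h
  · simp only [hji, if_false]
    have h3 := (Finset.sum_eq_zero_iff_of_nonneg fun l _ => mul_self_nonneg (Q i l)).mp h2
      j (Finset.mem_erase.mpr ⟨fun hh => hji hh.symm, Finset.mem_univ j⟩)
    exact mul_self_eq_zero.mp h3

lemma trace_quartic_le (A Q : Matrix (Fin M) (Fin M) ℝ) (hA : Aᵀ = A) (hQs : Qᵀ = Q)
    (hQi : Q * Q = Q) :
    (A * Q * A * Q).trace ≤ (A * A * Q).trace ∧
      ((A * Q * A * Q).trace = (A * A * Q).trace ↔ A * Q = Q * A) := by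
  set R := A * Q - Q * A * Q with hR
  have hRt : Rᵀ = Q * A - Q * A * Q := by
    simp [hR, Matrix.transpose_sub, Matrix.transpose_mul, hA, hQs, Matrix.mul_assoc]
  have hexp : Rᵀ * R = Q * A * A * Q - Q * A * Q * A * Q := by
    rw [hRt, hR]
    have e1 : (Q * A) * (Q * A * Q) = Q * A * Q * A * Q := by noncomm_ring
    have e2 : (Q * A * Q) * (A * Q) = Q * A * Q * A * Q := by noncomm_ring
    have e3 : (Q * A * Q) * (Q * A * Q) = Q * A * (Q * Q) * A * Q := by noncomm_ring
    rw [Matrix.sub_mul, Matrix.mul_sub, Matrix.mul_sub, e1, e2, e3, hQi]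
    noncomm_ring
  have ht1 : (Q * A * A * Q).trace = (A * A * Q).trace := by
    rw [Matrix.trace_mul_cycle (Q * A) A Q,
      show Q * (Q * A) * A = Q * Q * (A * A) by noncomm_ring, hQi,
      Matrix.trace_mul_comm Q (A * A)]
  have ht2 : (Q * A * Q * A * Q).trace = (A * Q * A * Q).trace := by
    rw [Matrix.trace_mul_cycle (Q * A * Q) A Q,
      show Q * (Q * A * Q) * A = Q * Q * (A * Q * A) by noncomm_ring, hQi,
      Matrix.trace_mul_comm Q (A * Q * A)]
  have key : (Rᵀ * R).trace = (A * A * Q).trace - (A * Q * A * Q).trace := by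
    rw [hexp, Matrix.trace_sub, ht1, ht2]
  constructor
  · have := trace_tmul_nonneg R; linarith
  constructor
  · intro he
    have h0 : (Rᵀ * R).trace = 0 := by rw [key]; linarith
    have hzero := eq_zero_of_trace_tmul R h0
    have hAQ : A * Q = Q * A * Q := by rwa [hR, sub_eq_zero] at hzero
    have hQA : Q * A = Q * A * Q := by
      have := congrArg Matrix.transpose hAQ
      simpa [Matrix.transpose_mul, hA, hQs, ← Matrix.mul_assoc] using this
    exact hAQ.trans hQA.symm
  · intro hcomm
    have hh : A * Q * A * Q = A * A * Q := by
      calc A * Q * A * Q = A * (Q * A) * Q := by noncomm_ring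
        _ = A * (A * Q) * Q := by rw [← hcomm]
        _ = A * A * (Q * Q) := by noncomm_ring
        _ = A * A * Q := by rw [hQi]
    rw [hh]

lemma conj_mul' (U W X Y : Matrix (Fin M) (Fin M) ℝ) (hWU : W * U = 1) :
    (U * X * W) * (U * Y * W) = U * (X * Y) * W := by
  rw [show (U * X * W) * (U * Y * W) = U * X * (W * U) * (Y * W) by noncomm_ring, hWU,
    Matrix.mul_one]
  noncomm_ring

lemma trace_conj (U W X : Matrix (Fin M) (Fin M) ℝ) (hWU : W * U = 1) :
    (U * X * W).trace = X.trace := by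
  rw [Matrix.trace_mul_cycle U X W, hWU, Matrix.one_mul]

lemma transpose_conj (U W X : Matrix (Fin M) (Fin M) ℝ) :
    (U * X * W)ᵀ = Wᵀ * Xᵀ * Uᵀ := by
  simp [Matrix.transpose_mul, Matrix.mul_assoc]

lemma mulVec_dot (U : Matrix (Fin M) (Fin M) ℝ) (hU : Uᵀ * U = 1) (x y : Fin M → ℝ) :
    (U *ᵥ x) ⬝ᵥ (U *ᵥ y) = x ⬝ᵥ y := by
  rw [Matrix.dotProduct_mulVec, ← Matrix.mulVec_transpose, Matrix.mulVec_mulVec, hU,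
    Matrix.one_mulVec]

lemma diag_quadform (d : Fin M → ℝ) (v : Fin M → ℝ) (lam : ℝ)
    (hv : ∀ i, v i ≠ 0 → d i = lam) :
    (Matrix.diagonal d *ᵥ v) ⬝ᵥ v = lam * (v ⬝ᵥ v) := by
  rw [dotProduct, dotProduct, Finset.mul_sum]
  refine Finset.sum_congr rfl fun i _ => ?_
  rw [Matrix.mulVec_diagonal]
  by_cases h : v i = 0
  · simp [h]
  · rw [hv i h]; ring

lemma dot_self_nonneg (v : Fin M → ℝ) : 0 ≤ v ⬝ᵥ v :=
  Finset.sum_nonneg fun i _ => mul_self_nonneg _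

lemma dot_self_pos (v : Fin M → ℝ) (hv : v ≠ 0) : 0 < v ⬝ᵥ v :=
  lt_of_le_of_ne (dot_self_nonneg v) fun h => hv (dotProduct_self_eq_zero.mp h.symm)

lemma sum_block {p : Fin M → Prop} [DecidablePred p] [Fintype (Subtype p)]
    (f : Fin M → ℝ) (hf : ∀ l, ¬ p l → f l = 0) :
    ∑ l, f l = ∑ q : Subtype p, f ↑q := by
  rw [← Finset.sum_filter_of_ne (s := Finset.univ) (p := p)
      (fun x _ hx => by by_contra h; exact hx (hf x h))]
  exact Finset.sum_subtype _ (fun x => by simp) f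

lemma card_filter_val_lt (r : ℕ) (h : r ≤ M) :
    (Finset.univ.filter fun i : Fin M => (i : ℕ) < r).card = r := by
  rw [Finset.card_filter]
  rw [Fin.sum_univ_eq_sum_range (fun j => if j < r then 1 else 0) M]
  rw [← Finset.sum_subset (Finset.range_subset_range.mpr h)
    (fun x _ hx => by rw [Finset.mem_range, not_lt] at hx; rw [if_neg (by omega)])]
  calc ∑ x ∈ Finset.range r, (if x < r then 1 else 0)
      = ∑ x ∈ Finset.range r, 1 :=
        Finset.sum_congr rfl fun x hx => if_pos (Finset.mem_range.mp hx)
    _ = r := by simp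

lemma sum_ite_lt (n r : ℕ) (h : r ≤ n) :
    ∑ p : Fin n, (if (p : ℕ) < r then (1 : ℝ) else 0) = r := by
  rw [Finset.sum_boole]
  norm_cast
  exact card_filter_val_lt r h

lemma kyfan_key (c : Fin M → ℝ) (t : ℝ) (q π : Fin M → ℝ) :
    ∑ i, (c i - t) * (q i - π i) =
      ∑ i, c i * q i - t * (∑ i, q i) - ∑ i, (c i - t) * π i := by
  rw [Finset.mul_sum, ← Finset.sum_sub_distrib, ← Finset.sum_sub_distrib]
  exact Finset.sum_congr rfl fun i _ => by ring

lemma kf_term_nonneg (c : Fin M → ℝ) (t : ℝ) (q : Fin M → ℝ)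
    (h0 : ∀ i, 0 ≤ q i) (h1 : ∀ i, q i ≤ 1) (i : Fin M) :
    0 ≤ (c i - t) * (q i - (if c i < t then (1 : ℝ) else 0)) := by
  by_cases h : c i < t
  · rw [if_pos h]; nlinarith [h1 i]
  · rw [if_neg h]; rw [not_lt] at h; nlinarith [h0 i]

lemma kf_eqcase (c : Fin M → ℝ) (t : ℝ) (q : Fin M → ℝ)
    (h0 : ∀ i, 0 ≤ q i) (h1 : ∀ i, q i ≤ 1)
    (heq : ∑ i, (c i - t) * (q i - (if c i < t then (1 : ℝ) else 0)) = 0) :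
    ∀ i, c i ≠ t → q i = (if c i < t then (1 : ℝ) else 0) := by
  intro i hi
  have h := (Finset.sum_eq_zero_iff_of_nonneg
    (fun j _ => kf_term_nonneg c t q h0 h1 j)).mp heq i (Finset.mem_univ i)
  rcases mul_eq_zero.mp h with h' | h'
  · exact absurd (by linarith [sub_eq_zero.mp h']) hi
  · linarith [sub_eq_zero.mp h']

lemma kf_exact (c : Fin M → ℝ) (t : ℝ) (q : Fin M → ℝ)
    (hq : ∀ i, c i ≠ t → q i = (if c i < t then (1 : ℝ) else 0)) :
    ∑ i, (c i - t) * (q i - (if c i < t then (1 : ℝ) else 0)) = 0 := by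
  refine Finset.sum_eq_zero fun i _ => ?_
  by_cases h : c i = t
  · rw [h]; ring
  · rw [hq i h]; ring

lemma trace_D_mul (c : Fin M → ℝ) (X : Matrix (Fin M) (Fin M) ℝ) :
    (Matrix.diagonal c * X).trace = ∑ i, c i * X i i := by
  rw [Matrix.trace]
  exact Finset.sum_congr rfl fun i _ => by rw [Matrix.diag_apply, Matrix.diagonal_mul]

/-- Identification of the spectral projector below `t` in the diagonal frame. -/
lemma spectral_id (c : Fin M → ℝ) (t : ℝ) (P1 : Matrix (Fin M) (Fin M) ℝ)
    (hs : P1ᵀ = P1) (hi : P1 * P1 = P1)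
    (hcomm : Matrix.diagonal c * P1 = P1 * Matrix.diagonal c)
    (hlt : ∀ v : Fin M → ℝ, v ≠ 0 → P1 *ᵥ v = v →
      (Matrix.diagonal c *ᵥ v) ⬝ᵥ v < t * (v ⬝ᵥ v))
    (hge : ∀ v : Fin M → ℝ, P1 *ᵥ v = 0 →
      t * (v ⬝ᵥ v) ≤ (Matrix.diagonal c *ᵥ v) ⬝ᵥ v) :
    P1 = Matrix.diagonal (fun i => if c i < t then (1 : ℝ) else 0) := by
  have hblock : ∀ i j, c i ≠ c j → P1 i j = 0 := by
    intro i j hij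
    have h := congrFun (congrFun hcomm i) j
    rw [Matrix.diagonal_mul, Matrix.mul_diagonal] at h
    by_contra h0
    exact hij (mul_right_cancel₀ h0 (by linarith [h] : c i * P1 i j = c j * P1 i j) ▸ rfl)
  have hcol_hi : ∀ j : Fin M, t ≤ c j → ∀ i, P1 i j = 0 := by
    intro j hj i
    set v : Fin M → ℝ := fun i => P1 i j with hv
    by_cases hv0 : v = 0
    · exact congrFun hv0 i
    · exfalso
      have hfix : P1 *ᵥ v = v := by
        funext l
        show ∑ k, P1 l k * P1 k j = P1 l j
        rw [← Matrix.mul_apply, hi]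
      have hsup : ∀ i, v i ≠ 0 → c i = c j := by
        intro i h0
        by_contra hne
        exact h0 (hblock i j hne)
      have h1 := hlt v hv0 hfix
      rw [diag_quadform c v (c j) hsup] at h1
      have := dot_self_pos v hv0
      nlinarith
  have hcol_lo : ∀ j : Fin M, c j < t → ∀ i, P1 i j = if i = j then 1 else 0 := by
    intro j hj i
    set u : Fin M → ℝ := fun i => (if i = j then 1 else 0) - P1 i j with hu
    have hker : P1 *ᵥ u = 0 := by
      funext l
      show ∑ k, P1 l k * ((if k = j then 1 else 0) - P1 k j) = 0
      have : ∀ k, P1 l k * ((if k = j then 1 else 0) - P1 k j) =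
          (if k = j then P1 l k else 0) - P1 l k * P1 k j := by
        intro k; by_cases h : k = j <;> simp [h] <;> ring
      rw [Finset.sum_congr rfl fun k _ => this k, Finset.sum_sub_distrib,
        Finset.sum_ite_eq' Finset.univ j (fun k => P1 l k), if_pos (Finset.mem_univ j),
        ← Matrix.mul_apply, hi]
      ring
    have hsup : ∀ i, u i ≠ 0 → c i = c j := by
      intro i h0
      by_cases h : i = j
      · rw [h]
      · rw [hu] at h0
        simp only [if_neg h] at h0
        by_contra hne
        rw [hblock i j hne] at h0
        simp at h0
    have h1 := hge u hker
    rw [diag_quadform c u (c j) hsup] at h1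
    have h2 : u ⬝ᵥ u ≤ 0 := by nlinarith
    have h3 : u = 0 := dotProduct_self_eq_zero.mp (le_antisymm h2 (dot_self_nonneg u))
    have := congrFun h3 i
    rw [hu] at this
    simp only [Pi.zero_apply, sub_eq_zero] at this
    exact this.symm
  ext i j
  rw [Matrix.diagonal_apply]
  by_cases hj : c j < t
  · rw [hcol_lo j hj i]
    by_cases h : i = j
    · subst h; rw [if_pos rfl, if_pos rfl, if_pos hj]
    · rw [if_neg h, if_neg h]
  · rw [hcol_hi j (not_lt.mp hj) i]
    by_cases h : i = j
    · subst h; rw [if_pos rfl, if_neg hj]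
    · rw [if_neg h]

/-- For a symmetric `n × n` matrix there is a commuting orthogonal projection of any
rank `r ≤ n`. -/
lemma exists_block_proj (n : ℕ) (A'' : Matrix (Fin n) (Fin n) ℝ) (hsym : A''ᵀ = A'')
    (r : ℕ) (hr : r ≤ n) :
    ∃ Δ : Matrix (Fin n) (Fin n) ℝ,
      Δᵀ = Δ ∧ Δ * Δ = Δ ∧ Δ.trace = (r : ℝ) ∧ A'' * Δ = Δ * A'' := by
  have hherm : A''.IsHermitian := by
    rw [Matrix.IsHermitian]
    ext i j
    simp only [Matrix.conjTranspose_apply, RCLike.star_def, starRingEnd_apply, star_trivial]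
    exact congrFun (congrFun hsym i) j
  set V : Matrix (Fin n) (Fin n) ℝ := (hherm.eigenvectorUnitary : Matrix (Fin n) (Fin n) ℝ)
    with hV
  have hstar : star V = Vᵀ := by ext i j; simp [Matrix.star_apply]
  have hprop := hherm.eigenvectorUnitary.prop
  rw [Matrix.mem_unitaryGroup_iff] at hprop
  have hVVt : V * Vᵀ = 1 := by rw [← hstar]; exact hprop
  have hVtV : Vᵀ * V = 1 := mul_eq_one_comm.mp hVVt
  have hspec : A'' = V * Matrix.diagonal (RCLike.ofReal ∘ hherm.eigenvalues) * Vᵀ := by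
    conv_lhs => rw [hherm.spectral_theorem]
    rw [Unitary.conjStarAlgAut_apply, hstar]
  set χ : Fin n → ℝ := fun p => if (p : ℕ) < r then 1 else 0 with hχ
  refine ⟨V * Matrix.diagonal χ * Vᵀ, ?_, ?_, ?_, ?_⟩
  · simp [Matrix.transpose_mul, Matrix.diagonal_transpose, Matrix.mul_assoc]
  · rw [conj_mul' V Vᵀ _ _ hVtV, Matrix.diagonal_mul_diagonal,
      show (fun i => χ i * χ i) = χ from funext fun p => by
        by_cases h : (p : ℕ) < r <;> simp [hχ, h]]
  · rw [trace_conj V Vᵀ _ hVtV, Matrix.trace_diagonal]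
    exact sum_ite_lt n r hr
  · rw [hspec, conj_mul' V Vᵀ _ _ hVtV, conj_mul' V Vᵀ _ _ hVtV,
      Matrix.diagonal_mul_diagonal, Matrix.diagonal_mul_diagonal,
      show (fun i => (RCLike.ofReal ∘ hherm.eigenvalues) i * χ i) =
          (fun i => χ i * (RCLike.ofReal ∘ hherm.eigenvalues) i) from
        funext fun p => mul_comm _ _]


lemma trace_eq_sum (X : Matrix (Fin M) (Fin M) ℝ) : X.trace = ∑ i, X i i := rfl

lemma symm_apply (X : Matrix (Fin M) (Fin M) ℝ) (h : Xᵀ = X) (i j : Fin M) :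
    X i j = X j i :=
  (Matrix.transpose_apply X j i).symm.trans (congrFun (congrFun h j) i)

end Stmt9


set_option maxHeartbeats 1600000 in
open Stmt9 in
/-- if `[A,B] = 0`, `C = B − (1/2)A²` has sorted eigenvalues `c₁ ≤ ⋯ ≤ c_M`,
then `P ∈ Gr(m,ℝ^M)` is a global minimizer of `J` over `Gr(m,ℝ^M)` iff
`P = 1_{(−∞,c_m)}(C) + Δ` with `Δ` symmetric idempotent, `Ran Δ ⊆ Ker(C − c_m I)`,
`[A,Δ] = 0`, and `Tr P = m`. -/
theorem stmt_9 {M m : ℕ} (hM : 2 ≤ M) (hm1 : 1 ≤ m) (hm2 : m ≤ M - 1)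
    (A B : Matrix (Fin M) (Fin M) ℝ) (hA : A.IsSymm) (hApsd : A.PosSemidef)
    (hB : B.IsSymm) (hAB : commut A B = 0)
    (c : Fin M → ℝ) (hc : sortedEigs (B - (1 / 2 : ℝ) • (A * A)) c)
    (Pc : Matrix (Fin M) (Fin M) ℝ)
    (hPc : IsSpectralProjLT (B - (1 / 2 : ℝ) • (A * A)) (c ⟨m - 1, by omega⟩) Pc)
    (P : Matrix (Fin M) (Fin M) ℝ) :
    (Gr M m P ∧ ∀ Q : Matrix (Fin M) (Fin M) ℝ, Gr M m Q → Jfun A B P ≤ Jfun A B Q) ↔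
      ∃ Δ : Matrix (Fin M) (Fin M) ℝ,
        P = Pc + Δ ∧ Δ.IsSymm ∧ Δ * Δ = Δ ∧
        (∀ v : Fin M → ℝ,
          (B - (1 / 2 : ℝ) • (A * A)).mulVec (Δ.mulVec v) =
            c ⟨m - 1, by omega⟩ • Δ.mulVec v) ∧
        commut A Δ = 0 ∧ P.trace = (m : ℝ) := by
  classical
  set C : Matrix (Fin M) (Fin M) ℝ := B - (1 / 2 : ℝ) • (A * A) with hCdef
  set t : ℝ := c ⟨m - 1, by omega⟩ with htdef
  obtain ⟨hmono, U, hUUt, hCU⟩ := hc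
  have hUtU : Uᵀ * U = 1 := mul_eq_one_comm.mp hUUt
  have hAt : Aᵀ = A := hA
  have hBt : Bᵀ = B := hB
  have hABc : A * B = B * A := sub_eq_zero.mp hAB
  have hCt : Cᵀ = C := by
    rw [hCdef, Matrix.transpose_sub, Matrix.transpose_smul, Matrix.transpose_mul, hAt, hBt]
  have hCA : A * C = C * A := by
    have h3 : A * (A * A) = (A * A) * A := by noncomm_ring
    rw [hCdef, Matrix.mul_sub, Matrix.sub_mul, Matrix.mul_smul, Matrix.smul_mul, hABc, h3]
  -- conjugation helpers
  have hconj : ∀ X Y : Matrix (Fin M) (Fin M) ℝ,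
      (Uᵀ * X * U) * (Uᵀ * Y * U) = Uᵀ * (X * Y) * U := fun X Y =>
    conj_mul' Uᵀ U X Y hUUt
  have hconj2 : ∀ X Y : Matrix (Fin M) (Fin M) ℝ,
      (U * X * Uᵀ) * (U * Y * Uᵀ) = U * (X * Y) * Uᵀ := fun X Y =>
    conj_mul' U Uᵀ X Y hUtU
  have htrconj : ∀ X : Matrix (Fin M) (Fin M) ℝ, (Uᵀ * X * U).trace = X.trace := fun X =>
    trace_conj Uᵀ U X hUUt
  have htrconj2 : ∀ X : Matrix (Fin M) (Fin M) ℝ, (U * X * Uᵀ).trace = X.trace := fun X =>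
    trace_conj U Uᵀ X hUtU
  have hback : ∀ X : Matrix (Fin M) (Fin M) ℝ, U * (Uᵀ * X * U) * Uᵀ = X := by
    intro X
    rw [show U * (Uᵀ * X * U) * Uᵀ = (U * Uᵀ) * X * (U * Uᵀ) by noncomm_ring, hUUt,
      Matrix.one_mul, Matrix.mul_one]
  have htconj : ∀ X : Matrix (Fin M) (Fin M) ℝ, Xᵀ = X → (Uᵀ * X * U)ᵀ = Uᵀ * X * U := by
    intro X hX
    rw [transpose_conj, Matrix.transpose_transpose, hX]
  have htconj2 : ∀ X : Matrix (Fin M) (Fin M) ℝ, Xᵀ = X → (U * X * Uᵀ)ᵀ = U * X * Uᵀ := by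
    intro X hX
    rw [transpose_conj, Matrix.transpose_transpose, hX]
  have hDC : Uᵀ * C * U = Matrix.diagonal c := by
    rw [hCU, show Uᵀ * (U * Matrix.diagonal c * Uᵀ) * U
        = (Uᵀ * U) * Matrix.diagonal c * (Uᵀ * U) by noncomm_ring, hUtU,
      Matrix.one_mul, Matrix.mul_one]
  set A' : Matrix (Fin M) (Fin M) ℝ := Uᵀ * A * U with hA'def
  have hA't : A'ᵀ = A' := htconj A hAt
  have hA'D : A' * Matrix.diagonal c = Matrix.diagonal c * A' := by
    calc A' * Matrix.diagonal c = (Uᵀ * A * U) * (Uᵀ * C * U) := by rw [hDC]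
      _ = Uᵀ * (A * C) * U := hconj A C
      _ = Uᵀ * (C * A) * U := by rw [hCA]
      _ = (Uᵀ * C * U) * (Uᵀ * A * U) := (hconj C A).symm
      _ = Matrix.diagonal c * A' := by rw [hDC]
  have hA'block : ∀ i j, c i ≠ c j → A' i j = 0 := by
    intro i j hij
    have h := congrFun (congrFun hA'D i) j
    rw [Matrix.mul_diagonal, Matrix.diagonal_mul] at h
    by_contra h0
    exact hij ((mul_left_cancel₀ h0 (by linarith) : c j = c i)).symm
  have hAU : A = U * A' * Uᵀ := (hback A).symm
  -- the diagonal model of Pc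
  set π : Fin M → ℝ := fun i => if c i < t then (1 : ℝ) else 0 with hπdef
  set Pd : Matrix (Fin M) (Fin M) ℝ := Matrix.diagonal π with hPddef
  have hπclass : ∀ i j, c i = c j → π i = π j := by
    intro i j h
    simp only [hπdef]
    rw [h]
  have hPdt : Pdᵀ = Pd := by rw [hPddef, Matrix.diagonal_transpose]
  have hPdi : Pd * Pd = Pd := by
    rw [hPddef, Matrix.diagonal_mul_diagonal]
    have hfun : (fun i => π i * π i) = π := by
      funext i
      simp only [hπdef]
      by_cases h : c i < t
      · rw [if_pos h]; norm_num
      · rw [if_neg h]; norm_num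
    rw [hfun]
  have hA'Pd : A' * Pd = Pd * A' := by
    ext i j
    rw [hPddef, Matrix.mul_diagonal, Matrix.diagonal_mul]
    by_cases h0 : A' i j = 0
    · rw [h0]; ring
    · have hcc : c i = c j := by
        by_contra hne; exact h0 (hA'block i j hne)
      rw [hπclass i j hcc]; ring
  -- spectral identification of Pc in the diagonal frame
  have hPct : Pcᵀ = Pc := hPc.1
  have hPci : Pc * Pc = Pc := hPc.2.1
  have hPcC : C * Pc = Pc * C := hPc.2.2.1
  have hPclt : ∀ v : Fin M → ℝ, v ≠ 0 → Pc *ᵥ v = v → (C *ᵥ v) ⬝ᵥ v < t * (v ⬝ᵥ v) :=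
    hPc.2.2.2.1
  have hPcge : ∀ v : Fin M → ℝ, Pc *ᵥ v = 0 → t * (v ⬝ᵥ v) ≤ (C *ᵥ v) ⬝ᵥ v :=
    hPc.2.2.2.2
  set P1 : Matrix (Fin M) (Fin M) ℝ := Uᵀ * Pc * U with hP1def
  have hP1t : P1ᵀ = P1 := htconj Pc hPct
  have hP1i : P1 * P1 = P1 := by rw [hP1def, hconj, hPci]
  have hP1D : Matrix.diagonal c * P1 = P1 * Matrix.diagonal c := by
    calc Matrix.diagonal c * P1 = (Uᵀ * C * U) * (Uᵀ * Pc * U) := by rw [hDC]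
      _ = Uᵀ * (C * Pc) * U := hconj C Pc
      _ = Uᵀ * (Pc * C) * U := by rw [hPcC]
      _ = (Uᵀ * Pc * U) * (Uᵀ * C * U) := (hconj Pc C).symm
      _ = P1 * Matrix.diagonal c := by rw [hDC]
  have hPcP1 : Pc = U * P1 * Uᵀ := (hback Pc).symm
  have hCmulU : ∀ v : Fin M → ℝ, C *ᵥ (U *ᵥ v) = U *ᵥ (Matrix.diagonal c *ᵥ v) := by
    intro v
    rw [Matrix.mulVec_mulVec, Matrix.mulVec_mulVec]
    congr 1
    rw [hCU, show U * Matrix.diagonal c * Uᵀ * U = U * Matrix.diagonal c * (Uᵀ * U) by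
      noncomm_ring, hUtU, Matrix.mul_one]
  have hUv0 : ∀ v : Fin M → ℝ, U *ᵥ v = 0 → v = 0 := by
    intro v hv
    have h2 : Uᵀ *ᵥ (U *ᵥ v) = 0 := by rw [hv, Matrix.mulVec_zero]
    rwa [Matrix.mulVec_mulVec, hUtU, Matrix.one_mulVec] at h2
  have hPcUmul : Pc * U = U * P1 := by
    rw [hPcP1, show U * P1 * Uᵀ * U = U * P1 * (Uᵀ * U) by noncomm_ring, hUtU,
      Matrix.mul_one]
  have hP1Pd : P1 = Pd := by
    rw [hPddef, hπdef]
    refine spectral_id c t P1 hP1t hP1i hP1D ?_ ?_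
    · intro v hv hfix
      have hw : Pc *ᵥ (U *ᵥ v) = U *ᵥ v := by
        rw [Matrix.mulVec_mulVec, hPcUmul, ← Matrix.mulVec_mulVec, hfix]
      have hwne : U *ᵥ v ≠ 0 := fun h => hv (hUv0 v h)
      have h1 := hPclt (U *ᵥ v) hwne hw
      rwa [hCmulU v, mulVec_dot U hUtU, mulVec_dot U hUtU] at h1
    · intro v hker
      have hw : Pc *ᵥ (U *ᵥ v) = 0 := by
        rw [Matrix.mulVec_mulVec, hPcUmul, ← Matrix.mulVec_mulVec, hker,
          Matrix.mulVec_zero]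
      have h1 := hPcge (U *ᵥ v) hw
      rwa [hCmulU v, mulVec_dot U hUtU, mulVec_dot U hUtU] at h1
  have hPcPd : Pc = U * Pd * Uᵀ := by rw [← hP1Pd]; exact hPcP1
  -- counting
  set k : ℕ := (Finset.univ.filter fun i : Fin M => c i < t).card with hkdef
  have hkm : k ≤ m - 1 := by
    have hsub : (Finset.univ.filter fun i : Fin M => c i < t) ⊆
        (Finset.univ.filter fun i : Fin M => (i : ℕ) < m - 1) := by
      intro i hi
      rw [Finset.mem_filter] at hi ⊢
      refine ⟨Finset.mem_univ i, ?_⟩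
      by_contra hcon
      rw [not_lt] at hcon
      have hle : (⟨m - 1, by omega⟩ : Fin M) ≤ i := by
        rw [Fin.le_def]; exact hcon
      have hti : t ≤ c i := hmono hle
      linarith [hi.2]
    calc k ≤ _ := Finset.card_le_card hsub
      _ = m - 1 := card_filter_val_lt (m - 1) (by omega)
  have hmn : m ≤ k + Fintype.card {i : Fin M // c i = t} := by
    have hsub : (Finset.univ.filter fun i : Fin M => (i : ℕ) < m) ⊆
        (Finset.univ.filter fun i : Fin M => c i < t) ∪
          (Finset.univ.filter fun i : Fin M => c i = t) := by
      intro i hi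
      rw [Finset.mem_filter] at hi
      have hi2 := hi.2
      have hle : i ≤ (⟨m - 1, by omega⟩ : Fin M) := by
        rw [Fin.le_def]
        show (i : ℕ) ≤ m - 1
        omega
      have hci : c i ≤ t := hmono hle
      rw [Finset.mem_union, Finset.mem_filter, Finset.mem_filter]
      rcases lt_or_eq_of_le hci with h | h
      · exact Or.inl ⟨Finset.mem_univ i, h⟩
      · exact Or.inr ⟨Finset.mem_univ i, h⟩
    calc m = (Finset.univ.filter fun i : Fin M => (i : ℕ) < m).card :=
        (card_filter_val_lt m (by omega)).symm
      _ ≤ _ := Finset.card_le_card hsub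
      _ ≤ k + Fintype.card {i : Fin M // c i = t} := by
        rw [hkdef, Fintype.card_subtype]
        exact Finset.card_union_le _ _
  -- block construction of a commuting projector inside the t-eigenspace
  set n : ℕ := Fintype.card {i : Fin M // c i = t} with hndef
  set e : {i : Fin M // c i = t} ≃ Fin n := Fintype.equivFin {i : Fin M // c i = t}
    with hedef
  set A2 : Matrix (Fin n) (Fin n) ℝ := fun p q => A' ↑(e.symm p) ↑(e.symm q) with hA2def
  have hA2t : A2ᵀ = A2 := by
    ext p q
    rw [Matrix.transpose_apply]
    show A' ↑(e.symm q) ↑(e.symm p) = A' ↑(e.symm p) ↑(e.symm q)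
    exact symm_apply A' hA't _ _
  obtain ⟨Δ2, hΔ2t, hΔ2i, hΔ2tr, hΔ2A⟩ := exists_block_proj n A2 hA2t (m - k) (by omega)
  have hΔ2sym : ∀ p q, Δ2 p q = Δ2 q p := fun p q => symm_apply Δ2 hΔ2t p q
  have hA2entry : ∀ (i j : Fin M) (hi : c i = t) (hj : c j = t),
      A2 (e ⟨i, hi⟩) (e ⟨j, hj⟩) = A' i j := by
    intro i j hi hj
    show A' ↑(e.symm (e ⟨i, hi⟩)) ↑(e.symm (e ⟨j, hj⟩)) = A' i j
    rw [Equiv.symm_apply_apply, Equiv.symm_apply_apply]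
  set Δ0 : Matrix (Fin M) (Fin M) ℝ := fun i j =>
    if h : c i = t ∧ c j = t then Δ2 (e ⟨i, h.1⟩) (e ⟨j, h.2⟩) else 0 with hΔ0def
  have hΔ0val : ∀ (i j : Fin M) (hi : c i = t) (hj : c j = t),
      Δ0 i j = Δ2 (e ⟨i, hi⟩) (e ⟨j, hj⟩) := by
    intro i j hi hj
    show (if h : c i = t ∧ c j = t then Δ2 (e ⟨i, h.1⟩) (e ⟨j, h.2⟩) else 0) = _
    rw [dif_pos ⟨hi, hj⟩]
  have hΔ0sup : ∀ i j : Fin M, ¬(c i = t ∧ c j = t) → Δ0 i j = 0 := by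
    intro i j h
    show (if h : c i = t ∧ c j = t then Δ2 (e ⟨i, h.1⟩) (e ⟨j, h.2⟩) else 0) = 0
    rw [dif_neg h]
  have hesymm : ∀ q : {i : Fin M // c i = t},
      (⟨(q : Fin M), q.prop⟩ : {i : Fin M // c i = t}) = q := fun q => Subtype.ext rfl
  have hΔ0t : Δ0ᵀ = Δ0 := by
    ext i j
    rw [Matrix.transpose_apply]
    by_cases hi : c i = t
    · by_cases hj : c j = t
      · rw [hΔ0val j i hj hi, hΔ0val i j hi hj, hΔ2sym]
      · rw [hΔ0sup j i (fun h => hj h.1), hΔ0sup i j (fun h => hj h.2)]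
    · rw [hΔ0sup j i (fun h => hi h.2), hΔ0sup i j (fun h => hi h.1)]
  have hΔ0i : Δ0 * Δ0 = Δ0 := by
    ext i j
    rw [Matrix.mul_apply]
    by_cases hi : c i = t
    · by_cases hj : c j = t
      · rw [hΔ0val i j hi hj]
        rw [sum_block (p := fun l => c l = t) (fun l => Δ0 i l * Δ0 l j)
          (fun l hl => by
            show Δ0 i l * Δ0 l j = 0
            rw [hΔ0sup i l (fun h => hl h.2)]; ring)]
        calc ∑ q : {i : Fin M // c i = t}, Δ0 i ↑q * Δ0 ↑q j
            = ∑ q : {i : Fin M // c i = t},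
                Δ2 (e ⟨i, hi⟩) (e q) * Δ2 (e q) (e ⟨j, hj⟩) := by
              refine Finset.sum_congr rfl fun q _ => ?_
              rw [hΔ0val i ↑q hi q.prop, hΔ0val ↑q j q.prop hj, hesymm q]
          _ = ∑ p : Fin n, Δ2 (e ⟨i, hi⟩) p * Δ2 p (e ⟨j, hj⟩) :=
              Equiv.sum_comp e (fun p => Δ2 (e ⟨i, hi⟩) p * Δ2 p (e ⟨j, hj⟩))
          _ = (Δ2 * Δ2) (e ⟨i, hi⟩) (e ⟨j, hj⟩) := (Matrix.mul_apply).symm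
          _ = Δ2 (e ⟨i, hi⟩) (e ⟨j, hj⟩) := by rw [hΔ2i]
      · rw [hΔ0sup i j (fun h => hj h.2)]
        exact Finset.sum_eq_zero fun l _ => by
          rw [hΔ0sup l j (fun h => hj h.2)]; ring
    · rw [hΔ0sup i j (fun h => hi h.1)]
      exact Finset.sum_eq_zero fun l _ => by
        rw [hΔ0sup i l (fun h => hi h.1)]; ring
  have hΔ0tr : Δ0.trace = ((m - k : ℕ) : ℝ) := by
    rw [Matrix.trace]
    calc ∑ i, Δ0.diag i
        = ∑ q : {i : Fin M // c i = t}, Δ0 ↑q ↑q :=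
          sum_block (fun i => Δ0 i i) (fun l hl => hΔ0sup l l (fun h => hl h.1))
      _ = ∑ q : {i : Fin M // c i = t}, Δ2 (e q) (e q) := by
          refine Finset.sum_congr rfl fun q _ => ?_
          rw [hΔ0val ↑q ↑q q.prop q.prop, hesymm q]
      _ = ∑ p : Fin n, Δ2 p p := Equiv.sum_comp e (fun p => Δ2 p p)
      _ = Δ2.trace := (trace_eq_sum Δ2).symm
      _ = ((m - k : ℕ) : ℝ) := hΔ2tr
  have hA'Δ0 : A' * Δ0 = Δ0 * A' := by
    ext i j
    rw [Matrix.mul_apply, Matrix.mul_apply]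
    by_cases hi : c i = t
    · by_cases hj : c j = t
      · calc ∑ l, A' i l * Δ0 l j
            = ∑ q : {i : Fin M // c i = t}, A' i ↑q * Δ0 ↑q j :=
              sum_block (fun l => A' i l * Δ0 l j) (fun l hl => by
                show A' i l * Δ0 l j = 0
                rw [hΔ0sup l j fun h => hl h.1]; ring)
          _ = ∑ q : {i : Fin M // c i = t},
                A2 (e ⟨i, hi⟩) (e q) * Δ2 (e q) (e ⟨j, hj⟩) := by
              refine Finset.sum_congr rfl fun q _ => ?_
              rw [hΔ0val ↑q j q.prop hj, ← hA2entry i ↑q hi q.prop, hesymm q]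
          _ = ∑ p : Fin n, A2 (e ⟨i, hi⟩) p * Δ2 p (e ⟨j, hj⟩) :=
              Equiv.sum_comp e (fun p => A2 (e ⟨i, hi⟩) p * Δ2 p (e ⟨j, hj⟩))
          _ = (A2 * Δ2) (e ⟨i, hi⟩) (e ⟨j, hj⟩) := (Matrix.mul_apply).symm
          _ = (Δ2 * A2) (e ⟨i, hi⟩) (e ⟨j, hj⟩) := by rw [hΔ2A]
          _ = ∑ p : Fin n, Δ2 (e ⟨i, hi⟩) p * A2 p (e ⟨j, hj⟩) := Matrix.mul_apply
          _ = ∑ q : {i : Fin M // c i = t},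
                Δ2 (e ⟨i, hi⟩) (e q) * A2 (e q) (e ⟨j, hj⟩) :=
              (Equiv.sum_comp e (fun p => Δ2 (e ⟨i, hi⟩) p * A2 p (e ⟨j, hj⟩))).symm
          _ = ∑ q : {i : Fin M // c i = t}, Δ0 i ↑q * A' ↑q j := by
              refine Finset.sum_congr rfl fun q _ => ?_
              rw [hΔ0val i ↑q hi q.prop, ← hA2entry ↑q j q.prop hj, hesymm q]
          _ = ∑ l, Δ0 i l * A' l j :=
              (sum_block (fun l => Δ0 i l * A' l j) (fun l hl => by
                show Δ0 i l * A' l j = 0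
                rw [hΔ0sup i l fun h => hl h.2]; ring)).symm
      · refine (Finset.sum_eq_zero fun l _ => ?_).trans
          (Finset.sum_eq_zero fun l _ => ?_).symm
        · rw [hΔ0sup l j (fun h => hj h.2)]; ring
        · by_cases hl : c l = t
          · rw [hA'block l j (by rw [hl]; exact fun hh => hj hh.symm)]; ring
          · rw [hΔ0sup i l (fun h => hl h.2)]; ring
    · refine (Finset.sum_eq_zero fun l _ => ?_).trans
        (Finset.sum_eq_zero fun l _ => ?_).symm
      · by_cases hl : c l = t
        · rw [hA'block i l (by rw [hl]; exact fun hh => hi hh)]; ring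
        · rw [hΔ0sup l j (fun h => hl h.1)]; ring
      · rw [hΔ0sup i l (fun h => hi h.1)]; ring
  -- diagonal scaling of block-supported matrices
  have hDrow : ∀ X : Matrix (Fin M) (Fin M) ℝ, (∀ i j, c i ≠ t → X i j = 0) →
      Matrix.diagonal c * X = t • X := by
    intro X hX
    ext i j
    rw [Matrix.diagonal_mul, Matrix.smul_apply, smul_eq_mul]
    by_cases h : c i = t
    · rw [h]
    · rw [hX i j h]; ring
  -- the optimal value
  set lowSum : ℝ := (∑ i, (c i - t) * π i) + t * (m : ℝ) with hLSdef
  have hCQexp : ∀ Q : Matrix (Fin M) (Fin M) ℝ,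
      (C * Q).trace = (B * Q).trace - (1 / 2) * (A * A * Q).trace := by
    intro Q
    rw [hCdef, Matrix.sub_mul, Matrix.trace_sub, Matrix.smul_mul, Matrix.trace_smul,
      smul_eq_mul]
  have hTrCQ : ∀ Q : Matrix (Fin M) (Fin M) ℝ,
      (C * Q).trace = ∑ i, c i * (Uᵀ * Q * U) i i := by
    intro Q
    rw [← htrconj (C * Q), ← hconj C Q, hDC, trace_D_mul]
  have hJlow : ∀ Q : Matrix (Fin M) (Fin M) ℝ, Qᵀ = Q → Q * Q = Q →
      (C * Q).trace ≤ Jfun A B Q := by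
    intro Q hQt hQi
    have h1 := (trace_quartic_le A Q hAt hQt hQi).1
    have h2 := hCQexp Q
    show (C * Q).trace ≤ (B * Q).trace - (1 / 2) * (A * Q * A * Q).trace
    linarith
  have hJeq : ∀ Q : Matrix (Fin M) (Fin M) ℝ, Qᵀ = Q → Q * Q = Q → A * Q = Q * A →
      Jfun A B Q = (C * Q).trace := by
    intro Q hQt hQi hcm
    have h1 := (trace_quartic_le A Q hAt hQt hQi).2.mpr hcm
    have h2 := hCQexp Q
    show (B * Q).trace - (1 / 2) * (A * Q * A * Q).trace = (C * Q).trace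
    linarith
  have hdiagQ : ∀ Q : Matrix (Fin M) (Fin M) ℝ, Gr M m Q →
      (Uᵀ * Q * U)ᵀ = Uᵀ * Q * U ∧ (Uᵀ * Q * U) * (Uᵀ * Q * U) = Uᵀ * Q * U ∧
        ∑ i, (Uᵀ * Q * U) i i = (m : ℝ) := by
    intro Q hQ
    obtain ⟨hQt, hQi, hQtr⟩ := hQ
    refine ⟨htconj Q hQt, by rw [hconj, hQi], ?_⟩
    have h2 := htrconj Q
    rw [hQtr] at h2
    rw [← h2, trace_eq_sum]
  have hlb : ∀ Q, Gr M m Q → lowSum ≤ Jfun A B Q := by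
    intro Q hQ
    have hQt : Qᵀ = Q := hQ.1
    have hQi : Q * Q = Q := hQ.2.1
    obtain ⟨hQ't, hQ'i, hQ'tr⟩ := hdiagQ Q hQ
    have h0 : ∀ i, 0 ≤ (Uᵀ * Q * U) i i := fun i => proj_diag_nonneg _ hQ't hQ'i i
    have h1 : ∀ i, (Uᵀ * Q * U) i i ≤ 1 := fun i => proj_diag_le_one _ hQ't hQ'i i
    have hnn : 0 ≤ ∑ i, (c i - t) * ((Uᵀ * Q * U) i i - π i) :=
      Finset.sum_nonneg fun i _ =>
        kf_term_nonneg c t (fun i => (Uᵀ * Q * U) i i) h0 h1 i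
    have hkey : (∑ i, (c i - t) * ((Uᵀ * Q * U) i i - π i)) =
        (∑ i, c i * (Uᵀ * Q * U) i i) - t * (∑ i, (Uᵀ * Q * U) i i)
          - ∑ i, (c i - t) * π i :=
      kyfan_key c t (fun i => (Uᵀ * Q * U) i i) π
    rw [hQ'tr] at hkey
    have htr := hTrCQ Q
    have hJ := hJlow Q hQt hQi
    have hLS : lowSum = (∑ i, (c i - t) * π i) + t * (m : ℝ) := hLSdef
    linarith
  -- the key construction: any diagonal-frame perturbation gives a minimizer
  have hkeyP : ∀ Δ' : Matrix (Fin M) (Fin M) ℝ, Δ'ᵀ = Δ' → Δ' * Δ' = Δ' →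
      (∀ i j, ¬(c i = t ∧ c j = t) → Δ' i j = 0) → A' * Δ' = Δ' * A' →
      (Pd + Δ').trace = (m : ℝ) →
      Gr M m (U * (Pd + Δ') * Uᵀ) ∧ Jfun A B (U * (Pd + Δ') * Uᵀ) = lowSum := by
    intro Δ' hΔt hΔi hsup hAc htr
    have hPdΔ : Pd * Δ' = 0 := by
      ext i j
      rw [hPddef, Matrix.diagonal_mul, Matrix.zero_apply]
      by_cases h : c i < t
      · rw [hsup i j (fun hh => absurd hh.1 (ne_of_lt h))]; ring
      · have hz : π i = 0 := by simp only [hπdef]; rw [if_neg h]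
        rw [hz]; ring
    have hΔPd : Δ' * Pd = 0 := by
      ext i j
      rw [hPddef, Matrix.mul_diagonal, Matrix.zero_apply]
      by_cases h : c j < t
      · rw [hsup i j (fun hh => absurd hh.2 (ne_of_lt h))]; ring
      · have hz : π j = 0 := by simp only [hπdef]; rw [if_neg h]
        rw [hz]; ring
    have hQt : (Pd + Δ')ᵀ = Pd + Δ' := by rw [Matrix.transpose_add, hPdt, hΔt]
    have hQi : (Pd + Δ') * (Pd + Δ') = Pd + Δ' := by
      rw [Matrix.add_mul, Matrix.mul_add, Matrix.mul_add, hPdi, hPdΔ, hΔPd, hΔi]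
      simp only [add_zero, zero_add]
    have hPt := htconj2 _ hQt
    have hPi : (U * (Pd + Δ') * Uᵀ) * (U * (Pd + Δ') * Uᵀ) = U * (Pd + Δ') * Uᵀ := by
      rw [hconj2, hQi]
    have hPtr : (U * (Pd + Δ') * Uᵀ).trace = (m : ℝ) := by rw [htrconj2, htr]
    have hAcm : A * (U * (Pd + Δ') * Uᵀ) = (U * (Pd + Δ') * Uᵀ) * A := by
      rw [hAU, hconj2, hconj2]
      congr 1
      rw [Matrix.mul_add, Matrix.add_mul, hA'Pd, hAc]
    refine ⟨⟨hPt, hPi, hPtr⟩, ?_⟩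
    rw [hJeq _ hPt hPi hAcm, hTrCQ]
    have hUQ : Uᵀ * (U * (Pd + Δ') * Uᵀ) * U = Pd + Δ' := by
      rw [show Uᵀ * (U * (Pd + Δ') * Uᵀ) * U = (Uᵀ * U) * (Pd + Δ') * (Uᵀ * U) by
        noncomm_ring, hUtU, Matrix.one_mul, Matrix.mul_one]
    rw [hUQ]
    have hqval : ∀ i, c i ≠ t → (Pd + Δ') i i = π i := by
      intro i hi
      rw [Matrix.add_apply, hsup i i (fun hh => hi hh.1), add_zero, hPddef,
        Matrix.diagonal_apply_eq]
    have hexact : ∑ i, (c i - t) * ((Pd + Δ') i i - π i) = 0 :=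
      kf_exact c t (fun i => (Pd + Δ') i i) hqval
    have hkey2 : (∑ i, (c i - t) * ((Pd + Δ') i i - π i)) =
        (∑ i, c i * (Pd + Δ') i i) - t * (∑ i, (Pd + Δ') i i)
          - ∑ i, (c i - t) * π i :=
      kyfan_key c t (fun i => (Pd + Δ') i i) π
    have htr' : ∑ i, (Pd + Δ') i i = (m : ℝ) := by rw [← htr, trace_eq_sum]
    rw [htr'] at hkey2
    have hLS : lowSum = (∑ i, (c i - t) * π i) + t * (m : ℝ) := hLSdef
    linarith
  have hPdtr : Pd.trace = (k : ℝ) := by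
    rw [hPddef, Matrix.trace_diagonal]
    simp only [hπdef]
    rw [hkdef]
    exact Finset.sum_boole _ _
  constructor
  · -- forward direction
    rintro ⟨hGrP, hmin⟩
    have htr0 : (Pd + Δ0).trace = (m : ℝ) := by
      rw [Matrix.trace_add, hPdtr, hΔ0tr, ← Nat.cast_add]
      have hkmk : k + (m - k) = m := by omega
      rw [hkmk]
    obtain ⟨hGr0, hJ0⟩ := hkeyP Δ0 hΔ0t hΔ0i hΔ0sup hA'Δ0 htr0
    have hPle : Jfun A B P ≤ lowSum := by
      rw [← hJ0]; exact hmin _ hGr0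
    have hPt : Pᵀ = P := hGrP.1
    have hPi2 : P * P = P := hGrP.2.1
    obtain ⟨hP't, hP'i, hP'tr⟩ := hdiagQ P hGrP
    have h0 : ∀ i, 0 ≤ (Uᵀ * P * U) i i := fun i => proj_diag_nonneg _ hP't hP'i i
    have h1 : ∀ i, (Uᵀ * P * U) i i ≤ 1 := fun i => proj_diag_le_one _ hP't hP'i i
    have hnn : 0 ≤ ∑ i, (c i - t) * ((Uᵀ * P * U) i i - π i) :=
      Finset.sum_nonneg fun i _ =>
        kf_term_nonneg c t (fun i => (Uᵀ * P * U) i i) h0 h1 i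
    have hkey : (∑ i, (c i - t) * ((Uᵀ * P * U) i i - π i)) =
        (∑ i, c i * (Uᵀ * P * U) i i) - t * (∑ i, (Uᵀ * P * U) i i)
          - ∑ i, (c i - t) * π i :=
      kyfan_key c t (fun i => (Uᵀ * P * U) i i) π
    rw [hP'tr] at hkey
    have htrP := hTrCQ P
    have hJge := hJlow P hPt hPi2
    have hLS : lowSum = (∑ i, (c i - t) * π i) + t * (m : ℝ) := hLSdef
    have hEq2 : (C * P).trace = lowSum := by linarith
    have hJdef : Jfun A B P = (B * P).trace - (1 / 2) * (A * P * A * P).trace := rfl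
    have hexpP := hCQexp P
    have hquart : (A * P * A * P).trace = (A * A * P).trace := by linarith
    have hAP : A * P = P * A := (trace_quartic_le A P hAt hPt hPi2).2.mp hquart
    have hkf0 : ∑ i, (c i - t) * ((Uᵀ * P * U) i i - π i) = 0 := by linarith
    have hqeq : ∀ i, c i ≠ t → (Uᵀ * P * U) i i = π i := fun i hi =>
      kf_eqcase c t (fun i => (Uᵀ * P * U) i i) h0 h1 hkf0 i hi
    set PP : Matrix (Fin M) (Fin M) ℝ := Uᵀ * P * U with hPPdef
    have hrow1 : ∀ i, c i < t → ∀ j, PP i j = if i = j then 1 else 0 := by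
      intro i hi
      refine proj_row_one PP hP't hP'i i ?_
      rw [hqeq i (ne_of_lt hi)]
      simp only [hπdef]
      rw [if_pos hi]
    have hrow0 : ∀ i, t < c i → ∀ j, PP i j = 0 := by
      intro i hi
      refine proj_row_zero PP hP't hP'i i ?_
      rw [hqeq i (ne_of_gt hi)]
      simp only [hπdef]
      rw [if_neg (not_lt.mpr (le_of_lt hi))]
    have hPPd : PP * Pd = Pd := by
      ext i j
      rw [hPddef, Matrix.mul_diagonal, Matrix.diagonal_apply]
      by_cases hj : c j < t
      · have hπj : π j = 1 := by simp only [hπdef]; rw [if_pos hj]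
        have hcol : PP i j = if j = i then 1 else 0 := by
          rw [symm_apply PP hP't i j]
          exact hrow1 j hj i
        rw [hπj, hcol, mul_one]
        by_cases h : i = j
        · subst h; rw [if_pos rfl, if_pos rfl, hπj]
        · rw [if_neg (fun hh => h hh.symm), if_neg h]
      · have hπj : π j = 0 := by simp only [hπdef]; rw [if_neg hj]
        rw [hπj, mul_zero]
        by_cases h : i = j
        · subst h; rw [if_pos rfl, hπj]
        · rw [if_neg h]
    have hPdPP : Pd * PP = Pd := by
      have h2 := congrArg Matrix.transpose hPPd
      rw [Matrix.transpose_mul, hP't, hPdt] at h2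
      exact h2
    set Δ' : Matrix (Fin M) (Fin M) ℝ := PP - Pd with hΔ'def
    have hΔ't : Δ'ᵀ = Δ' := by rw [hΔ'def, Matrix.transpose_sub, hP't, hPdt]
    have hΔ'i : Δ' * Δ' = Δ' := by
      rw [hΔ'def, Matrix.sub_mul, Matrix.mul_sub, Matrix.mul_sub, hPPd, hPdPP, hPdi,
        hP'i]
      abel
    have hΔ'row : ∀ i j, c i ≠ t → Δ' i j = 0 := by
      intro i j hi
      rw [hΔ'def, Matrix.sub_apply]
      rcases lt_or_gt_of_ne hi with h | h
      · rw [hrow1 i h j, hPddef, Matrix.diagonal_apply]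
        by_cases hh : i = j
        · subst hh
          rw [if_pos rfl, if_pos rfl]
          simp only [hπdef]
          rw [if_pos h]
          ring
        · rw [if_neg hh, if_neg hh]; ring
      · rw [hrow0 i h j, hPddef, Matrix.diagonal_apply]
        by_cases hh : i = j
        · subst hh
          rw [if_pos rfl]
          simp only [hπdef]
          rw [if_neg (not_lt.mpr (le_of_lt h))]
          ring
        · rw [if_neg hh]; ring
    have hΔ'sup : ∀ i j, ¬(c i = t ∧ c j = t) → Δ' i j = 0 := by
      intro i j h
      by_cases hi : c i = t
      · have hj : c j ≠ t := fun hh => h ⟨hi, hh⟩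
        rw [symm_apply Δ' hΔ't i j]
        exact hΔ'row j i hj
      · exact hΔ'row i j hi
    refine ⟨U * Δ' * Uᵀ, ?_, ?_, ?_, ?_, ?_, hGrP.2.2⟩
    · calc P = U * PP * Uᵀ := (hback P).symm
        _ = U * (Pd + Δ') * Uᵀ := by
            rw [show Pd + Δ' = PP from by rw [hΔ'def]; abel]
        _ = U * Pd * Uᵀ + U * Δ' * Uᵀ := by rw [Matrix.mul_add, Matrix.add_mul]
        _ = Pc + U * Δ' * Uᵀ := by rw [← hPcPd]
    · exact htconj2 Δ' hΔ't
    · rw [hconj2, hΔ'i]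
    · have hCΔ : C * (U * Δ' * Uᵀ) = t • (U * Δ' * Uᵀ) := by
        calc C * (U * Δ' * Uᵀ)
            = (U * Matrix.diagonal c * Uᵀ) * (U * Δ' * Uᵀ) := by rw [← hCU]
          _ = U * (Matrix.diagonal c * Δ') * Uᵀ := hconj2 _ _
          _ = U * (t • Δ') * Uᵀ := by rw [hDrow Δ' hΔ'row]
          _ = t • (U * Δ' * Uᵀ) := by rw [Matrix.mul_smul, Matrix.smul_mul]
      intro v
      rw [Matrix.mulVec_mulVec, hCΔ, Matrix.smul_mulVec]
    · have hA'PP : A' * PP = PP * A' := by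
        calc A' * PP = (Uᵀ * A * U) * (Uᵀ * P * U) := rfl
          _ = Uᵀ * (A * P) * U := hconj A P
          _ = Uᵀ * (P * A) * U := by rw [hAP]
          _ = (Uᵀ * P * U) * (Uᵀ * A * U) := (hconj P A).symm
          _ = PP * A' := rfl
      have hA'Δ' : A' * Δ' = Δ' * A' := by
        rw [hΔ'def, Matrix.mul_sub, Matrix.sub_mul, hA'PP, hA'Pd]
      show A * (U * Δ' * Uᵀ) - (U * Δ' * Uᵀ) * A = 0
      rw [hAU, hconj2, hconj2, hA'Δ']
      exact sub_self _
  · -- backward direction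
    rintro ⟨Δ, hPΔ, hΔsym, hΔidem, hΔC, hΔA, htrP⟩
    have hΔt : Δᵀ = Δ := hΔsym
    have hAΔ : A * Δ = Δ * A := sub_eq_zero.mp hΔA
    have hCΔ : C * Δ = t • Δ := by
      ext i j
      have h := hΔC (Pi.single j 1)
      have hL : (C * Δ) *ᵥ Pi.single j 1 = t • (Δ *ᵥ Pi.single j 1) := by
        rw [← Matrix.mulVec_mulVec]; exact h
      have h2 := congrFun hL i
      simp only [Matrix.mulVec_single, mul_one, Pi.smul_apply, smul_eq_mul, MulOpposite.op_one,
        one_smul, Matrix.col_apply] at h2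
      rw [Matrix.smul_apply, smul_eq_mul]
      exact h2
    set Δ' : Matrix (Fin M) (Fin M) ℝ := Uᵀ * Δ * U with hΔ'def2
    have hΔ't : Δ'ᵀ = Δ' := htconj Δ hΔt
    have hΔ'i : Δ' * Δ' = Δ' := by rw [hΔ'def2, hconj, hΔidem]
    have hDΔ' : Matrix.diagonal c * Δ' = t • Δ' := by
      calc Matrix.diagonal c * Δ' = (Uᵀ * C * U) * (Uᵀ * Δ * U) := by rw [hDC]
        _ = Uᵀ * (C * Δ) * U := hconj C Δ
        _ = Uᵀ * (t • Δ) * U := by rw [hCΔ]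
        _ = t • (Uᵀ * Δ * U) := by rw [Matrix.mul_smul, Matrix.smul_mul]
    have hΔ'row : ∀ i j, c i ≠ t → Δ' i j = 0 := by
      intro i j hi
      have h := congrFun (congrFun hDΔ' i) j
      rw [Matrix.diagonal_mul, Matrix.smul_apply, smul_eq_mul] at h
      by_contra h0
      exact hi (mul_right_cancel₀ h0 h)
    have hΔ'sup : ∀ i j, ¬(c i = t ∧ c j = t) → Δ' i j = 0 := by
      intro i j h
      by_cases hi : c i = t
      · have hj : c j ≠ t := fun hh => h ⟨hi, hh⟩
        rw [symm_apply Δ' hΔ't i j]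
        exact hΔ'row j i hj
      · exact hΔ'row i j hi
    have hA'Δ' : A' * Δ' = Δ' * A' := by
      calc A' * Δ' = Uᵀ * (A * Δ) * U := hconj A Δ
        _ = Uᵀ * (Δ * A) * U := by rw [hAΔ]
        _ = Δ' * A' := (hconj Δ A).symm
    have hPU : P = U * (Pd + Δ') * Uᵀ := by
      rw [hPΔ, hPcPd, hΔ'def2, Matrix.mul_add, Matrix.add_mul, hback]
    have htr2 : (Pd + Δ').trace = (m : ℝ) := by
      have h2 := htrconj2 (Pd + Δ')
      rw [← hPU] at h2
      rw [← h2, htrP]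
    obtain ⟨hGr0, hJ0⟩ := hkeyP Δ' hΔ't hΔ'i hΔ'sup hA'Δ' htr2
    rw [hPU]
    exact ⟨hGr0, fun Q hQ => by rw [hJ0]; exact hlb Q hQ⟩
end
end
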